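/- arXiv:2101.05905 — 9 statements merged into one kernel-verified Lean document; each statement's English description precedes it below -/
import Mathlib

section
/- Let F be a free group and let S be a generating set of F whose image in the abelianization F^ab is a basis of F^ab as a free abelian group. Then F is freely generated by S (i.e., S is a free basis of F). -/
/-!
The inclusion `S → F` induces a surjection `FreeGroup S → F` since `S` generates `F`. An element
of its kernel already comes from `FreeGroup T` for a finite `T ⊆ S`. The subgroup `H` generated
by `T` is free (Nielsen–Schreier), and the images of `T` form a basis of `H^ab`: they span it,
and they are independent because they stay independent in `F^ab`. So `H` is free of rank `#T`,
and `FreeGroup T → H` becomes a surjective endomorphism of `FreeGroup T`. It is injective because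
finitely generated residually finite groups are Hopfian, and free groups are residually finite:
a reduced word of length `n` acts nontrivially on `{0, …, n}` once each generator is sent to a
permutation extending the partial map the word prescribes.
-/

/-- `S` is a free basis of the subgroup `H` of `G`: the homomorphism from the free
group on `S` induced by the inclusion `S → G` is injective with range `H`. -/
def IsFreeBasis {G : Type*} [Group G] (S : Set G) (H : Subgroup G) : Prop :=
  Function.Injective (FreeGroup.lift ((↑) : S → G)) ∧
    (FreeGroup.lift ((↑) : S → G)).range = H

open Function

namespace FreeGroup

variable {γ : Type*}

theorem lift_mk_singleton {G : Type*} [Group G] (f : γ → G) (a : γ) (b : Bool) :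
    lift f (mk [(a, b)]) = if b then f a else (f a)⁻¹ := by
  cases b
  · exact (_root_.map_inv (lift f) (of a)).trans (congrArg _ lift_apply_of)
  · exact lift_apply_of

theorem lift_mk_apply_eq {X : Type*} (σ : γ → Equiv.Perm X) :
    ∀ (L : List (γ × Bool)) (p : ℕ → X),
      (∀ i (hi : i < L.length), lift σ (mk [L[i]]) (p (i + 1)) = p i) →
        lift σ (mk L) (p L.length) = p 0
  | [], _, _ => by simp [← one_eq_mk]
  | l :: L, p, h => by
    have hL := lift_mk_apply_eq σ L (p ∘ (· + 1)) fun i hi => h (i + 1) (by simpa)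
    rw [List.length_cons, ← List.singleton_append, ← mul_mk, _root_.map_mul,
      Equiv.Perm.mul_apply]
    simp only [comp_apply] at hL
    rw [hL]
    exact h 0 (by simp)

theorem IsReduced.eq_of_add_ite_eq {L : List (γ × Bool)} (hL : IsReduced L) (c : Bool)
    {i j : ℕ} (hi : i < L.length) (hj : j < L.length) (ha : L[i].1 = L[j].1)
    (h : i + (if L[i].2 = c then 1 else 0) = j + (if L[j].2 = c then 1 else 0)) : i = j := by
  have hchain := List.isChain_iff_getElem.mp hL
  by_contra hne
  split_ifs at h with hic hjc hjc
  · omega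
  · obtain rfl : j = i + 1 := by omega
    exact hjc (hchain i hj ha ▸ hic)
  · obtain rfl : i = j + 1 := by omega
    exact hic (hchain j hi ha.symm ▸ hjc)
  · omega

theorem exists_lift_perm_ne_one [DecidableEq γ] {x : FreeGroup γ} (hx : x ≠ 1) :
    ∃ σ : γ → Equiv.Perm (Fin (x.toWord.length + 1)), lift σ x ≠ 1 := by
  set L := x.toWord
  set n := L.length
  let p (k : ℕ) : Fin (n + 1) := Fin.ofNat (n + 1) k
  have hp : ∀ k l, k ≤ n → l ≤ n → p k = p l → k = l := fun k l hk hl h => by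
    have := congrArg Fin.val h
    simp only [p, Fin.val_ofNat] at this
    rwa [Nat.mod_eq_of_lt (by omega), Nat.mod_eq_of_lt (by omega)] at this
  -- the `i`-th letter `(a, b)` of `L` asks `σ a ^ (±1)` to send `i + 1` to `i`; the edge it
  -- prescribes for `σ a` runs from `shift true i` to `shift false i`
  let shift (c : Bool) (i : Fin n) : ℕ := i + if L[i].2 = c then 1 else 0
  have hshift : ∀ (a : γ) (c : Bool),
      Injective fun i : {i : Fin n // L[i].1 = a} => p (shift c i) := by
    rintro a c ⟨i, hi⟩ ⟨j, hj⟩ h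
    have := hp _ _ (by simp only [shift]; split_ifs <;> omega)
      (by simp only [shift]; split_ifs <;> omega) h
    exact Subtype.ext <| Fin.ext <|
      isReduced_toWord.eq_of_add_ite_eq c i.2 j.2 (hi.trans hj.symm) this
  choose σ hσ using fun a => Equiv.Perm.exists_extending_pair _ _ (hshift a true) (hshift a false)
  refine ⟨σ, fun h1 => ?_⟩
  have hstep : ∀ i (hi : i < n), lift σ (mk [L[i]]) (p (i + 1)) = p i := by
    intro i hi
    have hedge := hσ L[i].1 ⟨⟨i, hi⟩, rfl⟩
    simp only [shift, Fin.getElem_fin] at hedge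
    rcases hLi : L[i] with ⟨a, b⟩
    simp only [hLi] at hedge ⊢
    cases b
    · simpa [lift_mk_singleton, Equiv.symm_apply_eq] using hedge.symm
    · simpa [lift_mk_singleton] using hedge
  have hpath := lift_mk_apply_eq σ L p hstep
  rw [mk_toWord, h1] at hpath
  have hn : n = 0 := hp _ _ le_rfl (Nat.zero_le _) hpath
  exact hx (toWord_eq_nil_iff.mp (List.length_eq_zero_iff.mp hn))

instance : Group.ResiduallyFinite (FreeGroup γ) := by
  classical
  exact Group.residuallyFinite_of_forall_exists_finite_monoidHom fun x hx =>
    let ⟨σ, hσ⟩ := exists_lift_perm_ne_one hx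
    ⟨_, _, inferInstance, lift σ, hσ⟩

theorem exists_finset_map_eq (w : FreeGroup γ) :
    ∃ (T : Finset γ) (w' : FreeGroup T), map (↑) w' = w := by
  classical
  suffices ∃ T : Finset γ, w ∈ Subgroup.closure (of '' (T : Set γ)) by
    obtain ⟨T, hT⟩ := this
    rw [← Subtype.range_coe (s := (T : Set γ)), ← range_map] at hT
    exact ⟨T, hT⟩
  induction w using FreeGroup.induction_on with
  | C1 => exact ⟨∅, Subgroup.one_mem _⟩
  | of a => exact ⟨{a}, Subgroup.subset_closure (by simp)⟩
  | inv_of a h =>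
    obtain ⟨T, hT⟩ := h
    exact ⟨T, Subgroup.inv_mem _ hT⟩
  | mul x y hx hy =>
    obtain ⟨T, hT⟩ := hx
    obtain ⟨U, hU⟩ := hy
    refine ⟨T ∪ U, Subgroup.mul_mem _ (Subgroup.closure_mono ?_ hT)
      (Subgroup.closure_mono ?_ hU)⟩
    all_goals exact Set.image_mono (by simp)

end FreeGroup

variable {G : Type*} [Group G]

instance Group.FG.finite_monoidHom [Group.FG G] {Q : Type*} [Group Q] [Finite Q] :
    Finite (G →* Q) := by
  obtain ⟨S, hS⟩ := Group.FG.out (G := G)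
  exact .of_injective (fun φ : G →* Q => fun s : S => φ s) fun φ ψ h =>
    MonoidHom.eq_of_eqOn_dense hS fun s hs => congrFun h ⟨s, hs⟩

theorem Group.ResiduallyFinite.injective_of_surjective [Group.FG G] [Group.ResiduallyFinite G]
    {f : G →* G} (hf : Surjective f) : Injective f := by
  refine (injective_iff_map_eq_one f).mpr fun x hx => by_contra fun hx1 => ?_
  obtain ⟨H, hxH⟩ := Group.exists_finiteIndexNormalSubgroup_notMem x hx1
  have hcomp : Injective fun ψ : G →* G ⧸ H.toSubgroup => ψ.comp f := fun ψ₁ ψ₂ h =>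
    MonoidHom.ext fun y => by obtain ⟨z, rfl⟩ := hf y; exact DFunLike.congr_fun h z
  obtain ⟨ψ, hψ⟩ := Finite.injective_iff_surjective.mp hcomp (QuotientGroup.mk' H.toSubgroup)
  have : (x : G ⧸ H.toSubgroup) = 1 := by simpa [hx] using (DFunLike.congr_fun hψ x).symm
  exact hxH ((QuotientGroup.eq_one_iff x).mp this)

theorem Abelianization.span_range_of_surjective {ι : Type*} {f : FreeGroup ι →* G}
    (hf : Surjective f) :
    Submodule.span ℤ (Set.range fun i => Additive.ofMul (of (f (FreeGroup.of i)))) = ⊤ := by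
  refine Submodule.eq_top_iff'.mpr fun m => ?_
  induction m using Additive.rec with | _ m
  obtain ⟨g, rfl⟩ : ∃ g, of g = m := QuotientGroup.mk_surjective m
  obtain ⟨w, rfl⟩ := hf g
  induction w using FreeGroup.induction_on with
  | C1 => simp
  | of i => exact Submodule.subset_span ⟨i, rfl⟩
  | inv_of i h =>
    rw [map_inv, map_inv, ofMul_inv]
    exact Submodule.neg_mem _ h
  | mul x y hx hy =>
    rw [map_mul, map_mul, ofMul_mul]
    exact Submodule.add_mem _ hx hy

theorem IsFreeGroup.injective_lift_of_linearIndependent_of_finite [IsFreeGroup G] {ι : Type*}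
    [Finite ι] (t : ι → G)
    (ht : LinearIndependent ℤ fun i => Additive.ofMul (Abelianization.of (t i))) :
    Injective (FreeGroup.lift t) := by
  set H := (FreeGroup.lift t).range
  set ψ := (FreeGroup.lift t).rangeRestrict
  have hψ : Surjective ψ := (FreeGroup.lift t).rangeRestrict_surjective
  have hv : LinearIndependent ℤ fun i =>
      Additive.ofMul (Abelianization.of (ψ (FreeGroup.of i))) := by
    refine LinearIndependent.of_comp
      (MonoidHom.toAdditive (Abelianization.map H.subtype)).toIntLinearMap ?_
    convert ht using 2 with i
    · simp [ψ]
    · rfl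
  -- two bases of `H^ab`, indexed by `ι` and by the free generators of `H`
  let bψ := Module.Basis.mk hv (Abelianization.span_range_of_surjective hψ).ge
  let eH := IsFreeGroup.toFreeGroup H
  let bH : Module.Basis (IsFreeGroup.Generators H) ℤ (Additive (Abelianization H)) :=
    (FreeAbelianGroup.basis _).map
      (MulEquiv.toAdditive eH.abelianizationCongr).toIntLinearEquiv.symm
  let e := FreeGroup.freeGroupCongr (bψ.indexEquiv bH)
  have hθ : Injective (e.symm.toMonoidHom.comp (eH.toMonoidHom.comp ψ)) :=
    Group.ResiduallyFinite.injective_of_surjective (e.symm.surjective.comp (eH.surjective.comp hψ))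
  simp only [MonoidHom.coe_comp, MulEquiv.coe_toMonoidHom] at hθ
  rw [← (FreeGroup.lift t).subtype_comp_rangeRestrict, MonoidHom.coe_comp]
  exact H.subtype_injective.comp hθ.of_comp.of_comp

theorem IsFreeGroup.injective_lift_of_linearIndependent [IsFreeGroup G] {ι : Type*} (t : ι → G)
    (ht : LinearIndependent ℤ fun i => Additive.ofMul (Abelianization.of (t i))) :
    Injective (FreeGroup.lift t) := by
  refine (injective_iff_map_eq_one _).mpr fun w hw => ?_
  obtain ⟨T, w, rfl⟩ := FreeGroup.exists_finset_map_eq w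
  have hT := injective_lift_of_linearIndependent_of_finite (fun i : T => t i)
    (ht.comp _ Subtype.val_injective)
  have hcomp : (FreeGroup.lift t).comp (FreeGroup.map (↑)) = FreeGroup.lift fun i : T => t i :=
    FreeGroup.ext_hom _ _ fun i => by simp
  rw [← hcomp] at hT
  rw [hT (hw.trans (map_one _).symm), map_one]

/-- If a generating set `S` of a free group `F` projects to a `ℤ`-basis of the
abelianization `F^ab`, then `S` is a free basis of `F`. -/
theorem stmt0 (α : Type) (S : Set (FreeGroup α))
    (hgen : Subgroup.closure S = ⊤)
    (hbasis : ∃ b : Module.Basis S ℤ (Additive (Abelianization (FreeGroup α))),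
      ∀ s : S, b s = Additive.ofMul (Abelianization.of (s : FreeGroup α))) :
    IsFreeBasis S (⊤ : Subgroup (FreeGroup α)) := by
  obtain ⟨b, hb⟩ := hbasis
  refine ⟨IsFreeGroup.injective_lift_of_linearIndependent _ ?_, ?_⟩
  · simpa only [← hb] using b.linearIndependent
  · rw [FreeGroup.range_lift_eq_closure, Subtype.range_coe, hgen]
end

section
/- A surjective group homomorphism between free groups of the same finite rank is an isomorphism. -/
/-!
Free groups are residually finite: for `w = mk L ≠ 1`, let `S` be the finite set of the `mk M`
with `M` a tail of `L`, and let each generator `a` permute `S` extending left multiplication by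
`of a` wherever it stays in `S`; then `w` sends `1 ∈ S` to `w`.

If `f : F →* F'` is onto and `Q` is a finite group, precomposition with `f` embeds `F' →* Q`
into `F →* Q`; for free groups of the same rank `n` both sets have `|Q| ^ n` elements, so
every homomorphism `F →* Q` factors through `f`. Thus `ker f` lies in every normal subgroup
of finite index, and is trivial.
-/

open Function

universe u

section PartialTranslation

variable {G : Type*} [Group G] (S : Set G)

def Set.mulLeftPartialEquiv (g : G) : {x : S // g * x ∈ S} ≃ {y : S // g⁻¹ * y ∈ S} where
  toFun x := ⟨⟨g * x, x.2⟩, by simp⟩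
  invFun y := ⟨⟨g⁻¹ * y, y.2⟩, by simp⟩
  left_inv x := by ext; simp
  right_inv y := by ext; simp

noncomputable def Set.mulLeftPerm [Finite S] (g : G) : Equiv.Perm S := by
  classical exact (S.mulLeftPartialEquiv g).extendSubtype

variable {S} [Finite S] {g : G}

theorem Set.mulLeftPerm_apply (x : S) (hx : g * x ∈ S) : (S.mulLeftPerm g x : G) = g * x := by
  classical
  rw [mulLeftPerm, Equiv.extendSubtype_apply_of_mem (S.mulLeftPartialEquiv g) _ hx]
  rfl

theorem Set.mulLeftPerm_symm_apply (y : S) (hy : g⁻¹ * y ∈ S) :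
    ((S.mulLeftPerm g).symm y : G) = g⁻¹ * y := by
  have : S.mulLeftPerm g ⟨g⁻¹ * y, hy⟩ = y :=
    Subtype.ext <| (mulLeftPerm_apply _ (by simp)).trans (mul_inv_cancel_left g y)
  exact congrArg Subtype.val ((S.mulLeftPerm g).symm_apply_eq.2 this.symm)

end PartialTranslation

namespace FreeGroup

variable {α : Type*}

theorem lift_mulLeftPerm_mk_apply_one {S : Set (FreeGroup α)} [Finite S] (hS : 1 ∈ S)
    {L : List (α × Bool)} (hL : ∀ M ∈ L.tails, mk M ∈ S) :
    (lift (fun a => S.mulLeftPerm (of a)) (mk L) ⟨1, hS⟩ : FreeGroup α) = mk L := by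
  induction L with
  | nil => rfl
  | cons x L ih =>
    simp only [List.tails_cons, List.mem_cons, forall_eq_or_imp] at hL
    have hL' : mk L ∈ S := hL.2 L ((List.mem_tails _ _).2 (List.suffix_refl L))
    obtain ⟨a, _ | _⟩ := x
    · have hmk : (of a)⁻¹ * mk L = mk ((a, false) :: L) := by rw [of, inv_mk, mul_mk]; rfl
      rw [← hmk, _root_.map_mul, Equiv.Perm.mul_apply, Subtype.ext (ih hL.2) (a2 := ⟨_, hL'⟩),
        _root_.map_inv, lift_apply_of, Equiv.Perm.inv_def]
      exact Set.mulLeftPerm_symm_apply _ (hmk ▸ hL.1)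
    · have hmk : of a * mk L = mk ((a, true) :: L) := mul_mk
      rw [← hmk, _root_.map_mul, Equiv.Perm.mul_apply, Subtype.ext (ih hL.2) (a2 := ⟨_, hL'⟩),
        lift_apply_of]
      exact Set.mulLeftPerm_apply _ (hmk ▸ hL.1)

instance : Group.ResiduallyFinite (FreeGroup α) :=
  Group.residuallyFinite_of_forall_exists_finite_monoidHom fun w hw => by
    classical
    let S : Set (FreeGroup α) := mk '' {M | M ∈ w.toWord.tails}
    have : Finite S := ((List.finite_toSet _).image _).to_subtype
    have hS : ∀ M ∈ w.toWord.tails, mk M ∈ S := fun M hM => ⟨M, hM, rfl⟩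
    refine ⟨Equiv.Perm S, inferInstance, inferInstance, lift fun a => S.mulLeftPerm (of a),
      fun h => hw ?_⟩
    have := lift_mulLeftPerm_mk_apply_one (hS [] (by simp)) hS
    rw [mk_toWord, h, Equiv.Perm.one_apply] at this
    exact this.symm

theorem nat_card_monoidHom {Q : Type*} [Group Q] [Finite α] :
    Nat.card (FreeGroup α →* Q) = Nat.card Q ^ Nat.card α := by
  rw [← Nat.card_congr lift, Nat.card_fun]

instance {Q : Type*} [Group Q] [Finite α] [Finite Q] : Finite (FreeGroup α →* Q) :=
  .of_equiv _ lift

end FreeGroup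

theorem MonoidHom.bijective_comp_right_of_card_le {G H Q : Type*} [Group G] [Group H] [Group Q]
    [Finite (G →* Q)] {f : G →* H} (hf : Surjective f)
    (hcard : Nat.card (G →* Q) ≤ Nat.card (H →* Q)) :
    Bijective fun φ : H →* Q => φ.comp f :=
  Injective.bijective_of_nat_card_le (fun _ _ => (cancel_right hf).1) hcard

theorem MonoidHom.injective_of_card_monoidHom_le {G : Type u} {H : Type*} [Group G] [Group H]
    [Group.ResiduallyFinite G] {f : G →* H} (hf : Surjective f)
    (hcard : ∀ (Q : Type u) [Group Q] [Finite Q],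
      Finite (G →* Q) ∧ Nat.card (G →* Q) ≤ Nat.card (H →* Q)) :
    Injective f := by
  refine (injective_iff_map_eq_one f).2 fun g hg =>
    Group.eq_one_iff_forall_finiteIndexNormalSubroup g fun N => ?_
  obtain ⟨_, hle⟩ := hcard (G ⧸ N.toSubgroup)
  obtain ⟨φ, hφ⟩ :=
    (bijective_comp_right_of_card_le hf hle).2 (QuotientGroup.mk' N.toSubgroup)
  rw [← FiniteIndexNormalSubgroup.mem_toSubgroup_iff, ← QuotientGroup.eq_one_iff,
    ← QuotientGroup.mk'_apply, ← hφ, comp_apply, hg, map_one]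

/-- A surjective homomorphism between free groups of the same finite rank is an
isomorphism (i.e. bijective). -/
theorem stmt2 (α β : Type) [Finite α] [Finite β] (h : Nat.card α = Nat.card β)
    (f : FreeGroup α →* FreeGroup β) (hf : Function.Surjective f) :
    Function.Bijective f := by
  refine ⟨f.injective_of_card_monoidHom_le hf fun Q _ _ => ⟨inferInstance, ?_⟩, hf⟩
  rw [FreeGroup.nat_card_monoidHom, FreeGroup.nat_card_monoidHom, h]
end

section
/- Let T be a set and S ⊆ T. The normal closure of S in the free group F(T) is freely generated by the set of conjugates { w⁻¹ s w : s ∈ S, w ∈ F(T \ S) }, where F(T \ S) is the subgroup of F(T) generated by T \ S. -/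
open FreeGroup SemidirectProduct

theorem isFreeBasis_range {G X : Type*} [Group G] (f : X → G)
    (hf : Function.Injective (FreeGroup.lift f)) :
    IsFreeBasis (Set.range f) (FreeGroup.lift f).range := by
  let e := Equiv.ofInjective f fun a b hab => of_injective (hf (by simpa using hab))
  have h : FreeGroup.lift ((↑) : Set.range f → G) =
      (FreeGroup.lift f).comp (freeGroupCongr e.symm : _ →* _) := by
    refine ext_hom _ _ fun y => ?_
    simp only [e, MonoidHom.coe_comp, MonoidHom.coe_coe, Function.comp_apply,
      freeGroupCongr_apply, map.of, lift_apply_of]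
    exact (Equiv.apply_ofInjective_symm _ y).symm
  rw [IsFreeBasis, h, MonoidHom.coe_comp, MonoidHom.range_comp, MulEquiv.range_eq_top,
    ← MonoidHom.range_eq_map]
  exact ⟨hf.comp (freeGroupCongr e.symm).injective, rfl⟩

namespace FreeGroup

def permCongrHom (α : Type*) : Equiv.Perm α →* MulAut (FreeGroup α) where
  toFun := freeGroupCongr
  map_one' := freeGroupCongr_refl
  map_mul' e f := (freeGroupCongr_trans f e).symm

/-- Right translation by `h⁻¹` (rather than left translation by `h`) is what makes conjugation by
`inr w` carry `inl (of (x, 1))` to `inl (of (x, w))`. -/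
def translateSnd (X H : Type*) [Group H] : H →* MulAut (FreeGroup (X × H)) :=
  (permCongrHom (X × H)).comp
    { toFun h := Equiv.prodCongr (Equiv.refl X) (Equiv.mulRight h⁻¹)
      map_one' := by ext <;> simp
      map_mul' g h := by ext <;> simp [mul_assoc] }

theorem translateSnd_of {X H : Type*} [Group H] (h : H) (x : X) (w : H) :
    translateSnd X H h (of (x, w)) = of (x, w * h⁻¹) := rfl

theorem inr_inv_mul_inl_of_mul_inr {X H : Type*} [Group H] (x : X) (w : H) :
    ((inr w)⁻¹ * inl (of (x, 1)) * inr w : FreeGroup (X × H) ⋊[translateSnd X H] H) =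
      inl (of (x, w)) := by
  rw [← _root_.map_inv, ← inl_aut_inv, ← _root_.map_inv, translateSnd_of, one_mul, inv_inv]

variable {T : Type*} (S : Set T)

def conjugate (p : S × FreeGroup ↥Sᶜ) : FreeGroup T :=
  (FreeGroup.map (↑) p.2)⁻¹ * of (p.1 : T) * FreeGroup.map (↑) p.2

theorem conjugate_mul_inv (s : S) (w h : FreeGroup ↥Sᶜ) :
    conjugate S (s, w * h⁻¹) =
      FreeGroup.map (↑) h * conjugate S (s, w) * (FreeGroup.map (↑) h)⁻¹ := by
  simp only [conjugate, _root_.map_mul, _root_.map_inv]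
  group

theorem range_conjugate :
    Set.range (conjugate S) =
      {g : FreeGroup T | ∃ s ∈ S, ∃ w ∈ Subgroup.closure (of '' Sᶜ),
        g = w⁻¹ * of s * w} := by
  ext g
  have hcl : Subgroup.closure (of '' Sᶜ) = (FreeGroup.map ((↑) : ↥Sᶜ → T)).range := by
    rw [range_map, Subtype.range_coe]
  rw [hcl]
  constructor
  · rintro ⟨⟨s, w⟩, rfl⟩
    exact ⟨s, s.2, _, ⟨w, rfl⟩, rfl⟩
  · rintro ⟨s, hs, _, ⟨w, rfl⟩, rfl⟩
    exact ⟨(⟨s, hs⟩, w), rfl⟩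

abbrev SemidirectCompl : Type _ :=
  FreeGroup (S × FreeGroup ↥Sᶜ) ⋊[translateSnd S (FreeGroup ↥Sᶜ)] FreeGroup ↥Sᶜ

open Classical in
noncomputable def toSemidirect : FreeGroup T →* SemidirectCompl S :=
  FreeGroup.lift fun t => if h : t ∈ S then inl (of (⟨t, h⟩, 1)) else inr (of ⟨t, h⟩)

def ofSemidirect : SemidirectCompl S →* FreeGroup T :=
  SemidirectProduct.lift (FreeGroup.lift (conjugate S)) (FreeGroup.map (↑)) fun h =>
    ext_hom _ _ fun ⟨s, w⟩ => by simp [translateSnd_of, conjugate_mul_inv, MulAut.conj_apply]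

variable {S}

theorem toSemidirect_of_mem {t : T} (h : t ∈ S) :
    toSemidirect S (of t) = inl (of (⟨t, h⟩, 1)) := by
  simp [toSemidirect, h]

theorem toSemidirect_of_notMem {t : T} (h : t ∉ S) :
    toSemidirect S (of t) = inr (of ⟨t, h⟩) := by
  simp [toSemidirect, h]

variable (S)

theorem toSemidirect_map_val (w : FreeGroup ↥Sᶜ) :
    toSemidirect S (FreeGroup.map (↑) w) = inr w := by
  suffices (toSemidirect S).comp (FreeGroup.map (↑)) = inr from DFunLike.congr_fun this w
  exact ext_hom _ _ fun u => by simp [toSemidirect_of_notMem u.2]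

theorem toSemidirect_comp_lift_conjugate :
    (toSemidirect S).comp (FreeGroup.lift (conjugate S)) = inl :=
  ext_hom _ _ fun ⟨s, w⟩ => by
    simp only [MonoidHom.comp_apply, lift_apply_of, conjugate, _root_.map_mul, _root_.map_inv,
      toSemidirect_map_val, toSemidirect_of_mem s.2, inr_inv_mul_inl_of_mul_inr]

theorem ofSemidirect_comp_toSemidirect : (ofSemidirect S).comp (toSemidirect S) = .id _ := by
  refine ext_hom _ _ fun t => ?_
  by_cases h : t ∈ S
  · simp [toSemidirect_of_mem h, ofSemidirect, conjugate]
  · simp [toSemidirect_of_notMem h, ofSemidirect]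

theorem lift_conjugate_injective : Function.Injective (FreeGroup.lift (conjugate S)) := by
  have h := inl_injective (φ := translateSnd S (FreeGroup ↥Sᶜ))
  rw [← toSemidirect_comp_lift_conjugate, MonoidHom.coe_comp] at h
  exact h.of_comp

theorem normal_range_lift_conjugate : (FreeGroup.lift (conjugate S)).range.Normal := by
  have hsurj : Function.Surjective (ofSemidirect S) := fun g =>
    ⟨toSemidirect S g, DFunLike.congr_fun (ofSemidirect_comp_toSemidirect S) g⟩
  have h : (ofSemidirect S).comp inl = FreeGroup.lift (conjugate S) := lift_comp_inl ..
  rw [← h, MonoidHom.range_comp, range_inl_eq_ker_rightHom]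
  exact (MonoidHom.normal_ker _).map _ hsurj

theorem range_lift_conjugate :
    (FreeGroup.lift (conjugate S)).range = Subgroup.normalClosure (of '' S) := by
  have := normal_range_lift_conjugate S
  apply le_antisymm
  · rw [range_lift_eq_closure, Subgroup.closure_le]
    rintro _ ⟨⟨s, w⟩, rfl⟩
    exact Subgroup.normalClosure_normal.conj_mem' _
      (Subgroup.subset_normalClosure (Set.mem_image_of_mem of s.2)) _
  · refine Subgroup.normalClosure_le_normal ?_
    rintro _ ⟨s, hs, rfl⟩
    exact ⟨of (⟨s, hs⟩, 1), by simp [conjugate]⟩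

end FreeGroup

/-- The normal closure of `S ⊆ T` in the free group `F(T)` is freely generated by
the conjugates `w⁻¹ s w` with `s ∈ S` and `w` in the subgroup generated by `T \ S`. -/
theorem stmt3 (T : Type) (S : Set T) :
    IsFreeBasis
      {g : FreeGroup T | ∃ s ∈ S, ∃ w ∈ Subgroup.closure (FreeGroup.of '' Sᶜ),
        g = w⁻¹ * FreeGroup.of s * w}
      (Subgroup.normalClosure (FreeGroup.of '' S)) := by
  rw [← FreeGroup.range_conjugate, ← FreeGroup.range_lift_conjugate]
  exact isFreeBasis_range _ (FreeGroup.lift_conjugate_injective S)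
end

section
/- Let G be a group and x, y, w, w' ∈ G. If w and w' have the same image in the abelianization G^ab, then the conjugates w⁻¹[x,y]w and w'⁻¹[x,y]w' have the same image in the abelianization of [G,G]. -/
/-- The conjugate `w⁻¹ [x,y] w` of the commutator `[x,y] = x⁻¹y⁻¹xy` lies in the
commutator subgroup. -/
lemma conj_comm_mem {G : Type*} [Group G] (x y w : G) :
    w⁻¹ * (x⁻¹ * y⁻¹ * x * y) * w ∈ commutator G := by
  have h : x⁻¹ * y⁻¹ * x * y ∈ commutator G := by
    have := Subgroup.commutator_mem_commutator (Subgroup.mem_top x⁻¹) (Subgroup.mem_top y⁻¹)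
    show _ ∈ ⁅(⊤ : Subgroup G), ⊤⁆
    simpa [commutatorElement_def] using this
  have := (Subgroup.commutator_normal ⊤ ⊤).conj_mem _ h w⁻¹
  show _ ∈ ⁅(⊤ : Subgroup G), ⊤⁆
  simpa using this

/- Writing `w' = w c` with `c = w⁻¹ w' ∈ H`, the element `w'⁻¹ g w'` is the conjugate
`c⁻¹ (w⁻¹ g w) c` inside `H`, and conjugation acts trivially on `Hᵃᵇ`. -/

theorem Abelianization.of_conj {H : Type*} [Group H] (a c : H) :
    of (c⁻¹ * a * c) = of a := by
  simp

theorem Subgroup.abelianization_of_conj_eq_of_inv_mul_mem {G : Type*} [Group G]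
    {H : Subgroup G} {g w w' : G} (hw : w⁻¹ * w' ∈ H) (h : w⁻¹ * g * w ∈ H)
    (h' : w'⁻¹ * g * w' ∈ H) :
    Abelianization.of (⟨w'⁻¹ * g * w', h'⟩ : H) = Abelianization.of ⟨w⁻¹ * g * w, h⟩ := by
  have hconj : (⟨w'⁻¹ * g * w', h'⟩ : H) =
      (⟨w⁻¹ * w', hw⟩ : H)⁻¹ * ⟨w⁻¹ * g * w, h⟩ * ⟨w⁻¹ * w', hw⟩ := by
    ext
    simp only [Subgroup.coe_mul, Subgroup.coe_inv]
    group
  rw [hconj, Abelianization.of_conj]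

/-- If `w` and `w'` have the same image in `G^ab`, then `w⁻¹[x,y]w` and `w'⁻¹[x,y]w'`
have the same image in the abelianization of the commutator subgroup `[G,G]`. -/
theorem stmt4 {G : Type*} [Group G] (x y w w' : G)
    (h : Abelianization.of w = Abelianization.of w') :
    Abelianization.of (⟨w⁻¹ * (x⁻¹ * y⁻¹ * x * y) * w, conj_comm_mem x y w⟩ :
        commutator G) =
      Abelianization.of (⟨w'⁻¹ * (x⁻¹ * y⁻¹ * x * y) * w', conj_comm_mem x y w'⟩ :
        commutator G) :=
  (Subgroup.abelianization_of_conj_eq_of_inv_mul_mem (QuotientGroup.eq.mp h) _ _).symm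
end

section
/- The commutator subgroup [F₂,F₂] of the free group F₂ on generators x₁, x₂ is freely generated by the set { (x₁^{k₁} x₂^{k₂})⁻¹ [x₁,x₂] (x₁^{k₁} x₂^{k₂}) : k₁, k₂ ∈ ℤ }. -/
/-!
Let `B` be the free group on the conjugates `c(a, b) = (x₁^a x₂^b)⁻¹ [x₁,x₂] (x₁^a x₂^b)`.
Then `F₂` acts on `B × ℤ × ℤ`: `x₁` translates `a`, and `x₂` translates `b` while multiplying the
`B`-coordinate on the left by a running product `n(a, b)` of generators, chosen so that
`n(0, b) = 1` and `n(a + 1, b)⁻¹ n(a, b) = c(a, b)`. Then `c(a, b)` acts on the fibre over the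
origin as left multiplication by the generator `c(a, b)` of `B`, so a word in the conjugates that
is trivial in `F₂` is already trivial in `B`.

The conjugates generate a normal subgroup: conjugation by `x₂` shifts `b`, and conjugation by `x₁`
shifts `a` up to conjugation by the commutators `⁅x₂^(-b), x₁^(±1)⁆`, which telescope into products
of conjugates. It contains `[x₁,x₂]`, so the quotient by it is abelian and it contains `[F₂,F₂]`.
-/

open scoped commutatorElement

open Subgroup in
theorem Subgroup.normal_closure_of_conj_mem {G : Type*} [Group G] {s t : Set G}
    (ht : closure t = ⊤)
    (hconj : ∀ x ∈ t, ∀ a ∈ s, x * a * x⁻¹ ∈ closure s ∧ x⁻¹ * a * x ∈ closure s) :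
    (closure s).Normal := by
  rw [← normalizer_eq_top_iff, eq_top_iff, ← ht, closure_le]
  intro x hx
  rw [SetLike.mem_coe, mem_normalizer_iff_map_conj_eq, MonoidHom.map_closure]
  refine le_antisymm (closure_le _ |>.2 ?_) (closure_le _ |>.2 fun a ha ↦ ?_)
  · rintro _ ⟨a, ha, rfl⟩
    exact (hconj x hx a ha).1
  · rw [← MonoidHom.map_closure]
    exact ⟨x⁻¹ * a * x, (hconj x hx a ha).2, by simp [mul_assoc]⟩

open Subgroup in
theorem commutator_le_of_closure_eq_top {G : Type*} [Group G] {N : Subgroup G} [N.Normal]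
    {t : Set G} (ht : closure t = ⊤) (h : ∀ x ∈ t, ∀ y ∈ t, ⁅x, y⁆ ∈ N) :
    commutator G ≤ N := by
  let q := QuotientGroup.mk' N
  have hq : ∀ g h : G, ⁅g, h⁆ ∈ N ↔ q g * q h = q h * q g := fun g h ↦ by
    rw [← commutatorElement_eq_one_iff_mul_comm, ← map_commutatorElement,
      QuotientGroup.mk'_apply, QuotientGroup.eq_one_iff]
  have : IsMulCommutative (closure (q '' t)) := isMulCommutative_closure <| by
    rintro _ ⟨x, hx, rfl⟩ _ ⟨y, hy, rfl⟩
    exact (hq x y).1 (h x hx y hy)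
  rw [← MonoidHom.map_closure, ht] at this
  rw [_root_.commutator_def, commutator_le]
  intro g₁ _ g₂ _
  exact (hq g₁ g₂).2 <|
    setLike_mul_comm (mem_map_of_mem q (mem_top g₁)) (mem_map_of_mem q (mem_top g₂))

theorem Subgroup.mem_of_forall_succ_mul_inv_mem {G : Type*} [Group G] {H : Subgroup G}
    {w : ℤ → G} (h₀ : w 0 ∈ H) (hstep : ∀ k, w (k + 1) * (w k)⁻¹ ∈ H) (k : ℤ) : w k ∈ H := by
  induction k using Int.induction_on with
  | zero => exact h₀
  | succ k ih => simpa using H.mul_mem (hstep k) ih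
  | pred k ih => simpa using H.mul_mem (H.inv_mem (hstep (-k - 1))) ih

theorem Equiv.Perm.zpow_apply_of_apply_eq_succ {α : Type*} (σ : Equiv.Perm α) (g : ℤ → α)
    (h : ∀ k, σ (g k) = g (k + 1)) (n k : ℤ) : (σ ^ n) (g k) = g (k + n) := by
  induction n using Int.induction_on generalizing k with
  | zero => simp
  | succ n ih => rw [← mul_self_zpow, Equiv.Perm.mul_apply, ih, h, add_assoc]
  | pred n ih =>
    have h' : σ⁻¹ (g k) = g (k - 1) := Equiv.Perm.inv_eq_iff_eq.2 (by rw [h, sub_add_cancel])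
    rw [zpow_sub_one, Equiv.Perm.mul_apply, h', ih]
    ring_nf

theorem FreeGroup.lift_injective_of_perm {α G X : Type*} [Group G] (f : α → G)
    (φ : G →* Equiv.Perm X) (j : FreeGroup α → X) (hj : Function.Injective j)
    (h : ∀ a v, φ (f a) (j v) = j (of a * v)) : Function.Injective (lift f) := by
  have key : ∀ w v, φ (lift f w) (j v) = j (w * v) := by
    intro w
    induction w using FreeGroup.induction_on with
    | C1 => simp
    | of a => simpa using h a
    | inv_of a _ =>
      intro v
      rw [_root_.map_inv, lift_apply_of, _root_.map_inv, Equiv.Perm.inv_eq_iff_eq, h,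
        mul_inv_cancel_left]
    | mul w w' hw hw' =>
      intro v
      rw [_root_.map_mul, _root_.map_mul, Equiv.Perm.mul_apply, hw', hw, mul_assoc]
  intro w w' hw
  simpa using hj (by rw [← key, hw, key] : j (w * 1) = j (w' * 1))

section RunningProduct

variable {G : Type*} [Group G] (f : ℤ → G)

def shiftMul : Equiv.Perm (G × ℤ) where
  toFun p := (p.1 * f p.2, p.2 + 1)
  invFun p := (p.1 * (f (p.2 - 1))⁻¹, p.2 - 1)
  left_inv _ := by simp
  right_inv _ := by simp

lemma shiftMul_zpow_apply_snd (n : ℤ) (p : G × ℤ) : ((shiftMul f ^ n) p).2 = p.2 + n := by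
  induction n using Int.induction_on generalizing p with
  | zero => simp
  | succ n ih =>
    rw [zpow_add_one, Equiv.Perm.mul_apply, ih, shiftMul]
    dsimp; ring
  | pred n ih =>
    rw [zpow_sub_one, Equiv.Perm.mul_apply, ih, Equiv.Perm.inv_def, shiftMul]
    dsimp; ring

/-- For `a ≥ 0`, `runningProd f a = f 0 * f 1 * ⋯ * f (a - 1)`: it is read off the orbit of
`(1, 0)` under `shiftMul f`, which avoids a case split on the sign of `a`. -/
def runningProd (a : ℤ) : G := ((shiftMul f ^ a) (1, 0)).1

lemma runningProd_zero : runningProd f 0 = 1 := rfl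

lemma runningProd_add_one (a : ℤ) : runningProd f (a + 1) = runningProd f a * f a := by
  rw [runningProd, ← mul_self_zpow, Equiv.Perm.mul_apply]
  change _ * f ((shiftMul f ^ a) (1, 0)).2 = _
  rw [shiftMul_zpow_apply_snd, zero_add, runningProd]

end RunningProduct

namespace FreeGroupCommutator

local notation "F₂" => FreeGroup (Fin 2)
local notation "x₁" => (FreeGroup.of 0 : F₂)
local notation "x₂" => (FreeGroup.of 1 : F₂)

def conjCommutator (k₁ k₂ : ℤ) : F₂ :=
  (x₁ ^ k₁ * x₂ ^ k₂)⁻¹ * (x₁⁻¹ * x₂⁻¹ * x₁ * x₂) * (x₁ ^ k₁ * x₂ ^ k₂)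

def conjCommutators : Set F₂ := {g | ∃ k₁ k₂ : ℤ, g = conjCommutator k₁ k₂}

section Action

variable {B : Type*} [Group B] (e : ℤ → ℤ → B)

def cocycle (a b : ℤ) : B := runningProd (fun a ↦ (e a b)⁻¹) a

lemma cocycle_zero (b : ℤ) : cocycle e 0 b = 1 := runningProd_zero _

lemma cocycle_add_one_inv_mul (a b : ℤ) : (cocycle e (a + 1) b)⁻¹ * cocycle e a b = e a b := by
  rw [cocycle, cocycle, runningProd_add_one]; group

def shift₁ : Equiv.Perm (B × ℤ × ℤ) where
  toFun p := (p.1, p.2.1 + 1, p.2.2)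
  invFun p := (p.1, p.2.1 - 1, p.2.2)
  left_inv _ := by simp
  right_inv _ := by simp

def shift₂ : Equiv.Perm (B × ℤ × ℤ) where
  toFun p := (cocycle e p.2.1 p.2.2 * p.1, p.2.1, p.2.2 + 1)
  invFun p := ((cocycle e p.2.1 (p.2.2 - 1))⁻¹ * p.1, p.2.1, p.2.2 - 1)
  left_inv _ := by simp
  right_inv _ := by simp

noncomputable def act : F₂ →* Equiv.Perm (B × ℤ × ℤ) := FreeGroup.lift ![shift₁, shift₂ e]

@[simp] lemma act_x₁ : act e x₁ = shift₁ := by simp [act]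

@[simp] lemma act_x₂ : act e x₂ = shift₂ e := by simp [act]

lemma act_x₁_zpow_mul_x₂_zpow_apply (k₁ k₂ : ℤ) (v : B) :
    act e (x₁ ^ k₁ * x₂ ^ k₂) (v, 0, 0) = (v, k₁, k₂) := by
  have h₁ := (shift₁ (B := B)).zpow_apply_of_apply_eq_succ (fun a ↦ (v, a, k₂)) (fun _ ↦ rfl)
  have h₂ := (shift₂ e).zpow_apply_of_apply_eq_succ (fun b ↦ (v, 0, b))
    (fun b ↦ by simp [shift₂, cocycle_zero])
  rw [map_mul, map_zpow, map_zpow, act_x₁, act_x₂, Equiv.Perm.mul_apply]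
  rw [show (shift₂ e ^ k₂) (v, 0, 0) = (v, 0, k₂) by simpa using h₂ k₂ 0]
  simpa using h₁ k₁ 0

lemma act_comm_apply (v : B) (a b : ℤ) :
    act e (x₁⁻¹ * x₂⁻¹ * x₁ * x₂) (v, a, b) = (e a b * v, a, b) := by
  simp [act, Equiv.Perm.inv_def, shift₁, shift₂, ← mul_assoc, cocycle_add_one_inv_mul]

lemma act_conjCommutator_apply (k₁ k₂ : ℤ) (v : B) :
    act e (conjCommutator k₁ k₂) (v, 0, 0) = (e k₁ k₂ * v, 0, 0) := by
  rw [conjCommutator, map_mul, map_mul, map_inv, Equiv.Perm.mul_apply, Equiv.Perm.mul_apply,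
    act_x₁_zpow_mul_x₂_zpow_apply, act_comm_apply, Equiv.Perm.inv_eq_iff_eq,
    act_x₁_zpow_mul_x₂_zpow_apply]

end Action

theorem lift_conjCommutators_injective :
    Function.Injective (FreeGroup.lift ((↑) : conjCommutators → F₂)) := by
  let e (k₁ k₂ : ℤ) : FreeGroup conjCommutators :=
    FreeGroup.of ⟨conjCommutator k₁ k₂, k₁, k₂, rfl⟩
  refine FreeGroup.lift_injective_of_perm _ (act e) (fun v ↦ (v, 0, 0))
    (fun _ _ h ↦ congrArg Prod.fst h) ?_
  rintro ⟨_, k₁, k₂, rfl⟩ v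
  exact act_conjCommutator_apply e k₁ k₂ v

lemma conj_x₂_conjCommutator (k₁ k₂ : ℤ) :
    x₂ * conjCommutator k₁ k₂ * x₂⁻¹ = conjCommutator k₁ (k₂ - 1) := by
  simp only [conjCommutator]; group

lemma inv_conj_x₂_conjCommutator (k₁ k₂ : ℤ) :
    x₂⁻¹ * conjCommutator k₁ k₂ * x₂ = conjCommutator k₁ (k₂ + 1) := by
  simp only [conjCommutator]; group

lemma conj_x₁_conjCommutator (k₁ k₂ : ℤ) :
    x₁ * conjCommutator k₁ k₂ * x₁⁻¹ =
      ⁅x₂ ^ (-k₂), x₁⁆⁻¹ * conjCommutator (k₁ - 1) k₂ * ⁅x₂ ^ (-k₂), x₁⁆ := by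
  simp only [conjCommutator, commutatorElement_def]; group

lemma inv_conj_x₁_conjCommutator (k₁ k₂ : ℤ) :
    x₁⁻¹ * conjCommutator k₁ k₂ * x₁ =
      ⁅x₂ ^ (-k₂), x₁⁻¹⁆⁻¹ * conjCommutator (k₁ + 1) k₂ * ⁅x₂ ^ (-k₂), x₁⁻¹⁆ := by
  simp only [conjCommutator, commutatorElement_def]; group

lemma conjCommutator_mem_closure (k₁ k₂ : ℤ) :
    conjCommutator k₁ k₂ ∈ Subgroup.closure conjCommutators :=
  Subgroup.subset_closure ⟨k₁, k₂, rfl⟩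

lemma commutatorElement_x₂_zpow_x₁_mem (b : ℤ) :
    ⁅x₂ ^ (-b), x₁⁆ ∈ Subgroup.closure conjCommutators := by
  refine Subgroup.mem_of_forall_succ_mul_inv_mem (w := fun b ↦ ⁅x₂ ^ (-b), x₁⁆) (by simp)
    (fun k ↦ ?_) b
  convert conjCommutator_mem_closure (-1) k using 1
  simp only [conjCommutator, commutatorElement_def]; group

lemma commutatorElement_x₂_zpow_x₁_inv_mem (b : ℤ) :
    ⁅x₂ ^ (-b), x₁⁻¹⁆ ∈ Subgroup.closure conjCommutators := by
  refine Subgroup.mem_of_forall_succ_mul_inv_mem (w := fun b ↦ ⁅x₂ ^ (-b), x₁⁻¹⁆) (by simp)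
    (fun k ↦ ?_) b
  convert Subgroup.inv_mem _ (conjCommutator_mem_closure 0 k) using 1
  simp only [conjCommutator, commutatorElement_def]; group

instance closure_conjCommutators_normal : (Subgroup.closure conjCommutators).Normal := by
  refine Subgroup.normal_closure_of_conj_mem (FreeGroup.closure_range_of _) ?_
  simp only [Set.forall_mem_range, Fin.forall_fin_two]
  refine ⟨?_, ?_⟩ <;> rintro _ ⟨k₁, k₂, rfl⟩
  · have h := commutatorElement_x₂_zpow_x₁_mem k₂
    have h' := commutatorElement_x₂_zpow_x₁_inv_mem k₂
    rw [conj_x₁_conjCommutator, inv_conj_x₁_conjCommutator]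
    exact ⟨mul_mem (mul_mem (inv_mem h) (conjCommutator_mem_closure _ _)) h,
      mul_mem (mul_mem (inv_mem h') (conjCommutator_mem_closure _ _)) h'⟩
  · exact ⟨conj_x₂_conjCommutator k₁ k₂ ▸ conjCommutator_mem_closure _ _,
      inv_conj_x₂_conjCommutator k₁ k₂ ▸ conjCommutator_mem_closure _ _⟩

lemma commutator_le_closure_conjCommutators :
    commutator F₂ ≤ Subgroup.closure conjCommutators := by
  have h : ⁅x₁, x₂⁆ ∈ Subgroup.closure conjCommutators := by
    convert (closure_conjCommutators_normal).conj_mem _ (conjCommutator_mem_closure 0 0) (x₂ * x₁)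
      using 1
    simp only [conjCommutator, commutatorElement_def]; group
  refine commutator_le_of_closure_eq_top (FreeGroup.closure_range_of _) ?_
  simp only [Set.forall_mem_range, Fin.forall_fin_two, commutatorElement_self, one_mem,
    true_and, and_true]
  exact ⟨h, by simpa [commutatorElement_inv] using Subgroup.inv_mem _ h⟩

lemma closure_conjCommutators_le_commutator :
    Subgroup.closure conjCommutators ≤ commutator F₂ := by
  rw [Subgroup.closure_le]
  rintro _ ⟨k₁, k₂, rfl⟩
  have h : x₁⁻¹ * x₂⁻¹ * x₁ * x₂ ∈ commutator F₂ := by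
    rw [commutator_def]
    simpa [commutatorElement_def] using
      Subgroup.commutator_mem_commutator (Subgroup.mem_top x₁⁻¹) (Subgroup.mem_top x₂⁻¹)
  simpa [conjCommutator, mul_assoc] using
    Subgroup.Normal.conj_mem inferInstance _ h (x₁ ^ k₁ * x₂ ^ k₂)⁻¹

theorem isFreeBasis_conjCommutators : IsFreeBasis conjCommutators (commutator F₂) := by
  refine ⟨lift_conjCommutators_injective, ?_⟩
  rw [FreeGroup.range_lift_eq_closure, Subtype.range_coe]
  exact le_antisymm closure_conjCommutators_le_commutator commutator_le_closure_conjCommutators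

end FreeGroupCommutator

/-- The commutator subgroup of the free group `F₂` on `x₁, x₂` is freely generated by
the conjugates `(x₁^{k₁} x₂^{k₂})⁻¹ [x₁,x₂] (x₁^{k₁} x₂^{k₂})`, `k₁, k₂ ∈ ℤ`. -/
theorem stmt5 :
    IsFreeBasis
      {g : FreeGroup (Fin 2) | ∃ k₁ k₂ : ℤ,
        g = (FreeGroup.of 0 ^ k₁ * FreeGroup.of 1 ^ k₂)⁻¹ *
              ((FreeGroup.of 0)⁻¹ * (FreeGroup.of 1)⁻¹ * FreeGroup.of 0 * FreeGroup.of 1) *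
            (FreeGroup.of 0 ^ k₁ * FreeGroup.of 1 ^ k₂)}
      (commutator (FreeGroup (Fin 2))) :=
  FreeGroupCommutator.isFreeBasis_conjCommutators
end

section
/- The commutator subgroup [F₂,F₂] of the free group F₂ on x₁, x₂ is freely generated by the set of commutators { [x₁^{k₁}, x₂^{k₂}] : k₁, k₂ ∈ ℤ, k₁ ≠ 0, k₂ ≠ 0 }. -/
/-!
Two Reidemeister–Schreier steps. If a homomorphism `e` sends `t` to the generator of `ℤ` and each
`f a` to the generator `(a, 0)` of the normal factor of `FreeGroup (α × ℤ) ⋊ ℤ` (with `ℤ`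
shifting the second coordinate), it sends `t⁻ᵏ (f a) tᵏ` to `(a, k)`, so these conjugates are
free. Applied to `F₂` with `t = y`, this makes the `x_j = y⁻ʲ x yʲ` free; applied to the free
group on the `x_j` with `t = x₀`, it makes the `x₀⁻ᵏ (x_j x₀⁻¹) x₀ᵏ` (`j ≠ 0`) free. For fixed
`j` their telescoping products are `x₀⁻ᵃ x_jᵃ = [x^a, y^j]`, and a telescoping change of
generators is invertible. Finally the subgroup generated by the `[x^a, y^b]` is normal by explicit
conjugation identities and contains `[x, y]`, so it is the whole commutator subgroup.
-/

open Function

section Telescope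

variable {G : Type*} [Group G]

def telescope (g : ℤ → G) (a : ℤ) : G :=
  Int.inductionOn' a 0 1 (fun k _ w => g (k + 1) * w) (fun k _ w => (g k)⁻¹ * w)

variable (g : ℤ → G)

@[simp]
theorem telescope_zero : telescope g 0 = 1 := Int.inductionOn'_self

theorem telescope_eq_mul_telescope_sub_one (a : ℤ) :
    telescope g a = g a * telescope g (a - 1) := by
  rcases le_or_gt 0 (a - 1) with ha | ha
  · have h := Int.inductionOn'_add_one (motive := fun _ => G) (zero := 1)
      (succ := fun k _ w => g (k + 1) * w) (pred := fun k _ w => (g k)⁻¹ * w) ha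
    rw [sub_add_cancel] at h
    exact h
  · have h := Int.inductionOn'_sub_one (motive := fun _ => G) (zero := 1)
      (succ := fun k _ w => g (k + 1) * w) (pred := fun k _ w => (g k)⁻¹ * w)
      (show a ≤ 0 by omega)
    simp only [telescope, h, mul_inv_cancel_left]

theorem eq_telescope {w : ℤ → G} (h0 : w 0 = 1) (hw : ∀ a, w a = g a * w (a - 1)) :
    w = telescope g := by
  funext a
  induction a using Int.induction_on with
  | zero => rw [h0, telescope_zero]
  | succ n ih => rw [hw, telescope_eq_mul_telescope_sub_one, add_sub_cancel_right, ih]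
  | pred n ih =>
    rw [← mul_right_inj (g (-n)), ← hw, ← telescope_eq_mul_telescope_sub_one, ih]

theorem map_telescope {H : Type*} [Group H] (f : G →* H) (a : ℤ) :
    f (telescope g a) = telescope (f ∘ g) a := by
  refine congrFun (eq_telescope (f ∘ g) (w := fun a => f (telescope g a)) ?_ fun a => ?_) a
  · simp
  · rw [telescope_eq_mul_telescope_sub_one g a, map_mul]
    rfl

theorem telescope_mul_inv {w : ℤ → G} (h0 : w 0 = 1) :
    telescope (fun k => w k * (w (k - 1))⁻¹) = w :=
  (eq_telescope _ h0 fun a => by group).symm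

end Telescope

section Shift

open FreeGroup SemidirectProduct

variable (α : Type*)

def shiftAut : Multiplicative ℤ →* MulAut (FreeGroup (α × ℤ)) :=
  MonoidHom.mk' (fun n => freeGroupCongr ((Equiv.refl α).prodCongr (Equiv.subRight n.toAdd)))
    fun m n => MulEquiv.toMonoidHom_injective <| ext_hom _ _ fun p => by
      simp [freeGroupCongr, Prod.map, sub_sub, add_comm]

variable {α}

theorem shiftAut_symm_of (n : Multiplicative ℤ) (a : α) (k : ℤ) :
    (shiftAut α n).symm (of (a, k)) = of (a, k + n.toAdd) := by
  simp [shiftAut, freeGroupCongr]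

theorem injective_lift_conj_zpow {G : Type*} [Group G] (t : G) (f : α → G)
    (e : G →* FreeGroup (α × ℤ) ⋊[shiftAut α] Multiplicative ℤ)
    (het : e t = inr (.ofAdd 1)) (hef : ∀ a, e (f a) = inl (of (a, 0))) :
    Injective (lift fun p : α × ℤ => (t ^ p.2)⁻¹ * f p.1 * t ^ p.2) := by
  have hcomp : e.comp (lift fun p : α × ℤ => (t ^ p.2)⁻¹ * f p.1 * t ^ p.2) = inl := by
    refine ext_hom _ _ fun ⟨a, k⟩ => ?_
    have h := inl_aut_inv (φ := shiftAut α) (.ofAdd k) (of (a, 0))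
    simp only [MulAut.inv_def, shiftAut_symm_of, toAdd_ofAdd, zero_add] at h
    have het_zpow : e (t ^ k) = inr (.ofAdd k) := by
      rw [map_zpow, het, ← map_zpow, ← ofAdd_zsmul, smul_eq_mul, mul_one]
    simp [h, het_zpow, hef]
  exact Injective.of_comp (f := e) (by rw [← MonoidHom.coe_comp, hcomp]; exact inl_injective)

end Shift

section ChangeOfBasis

open FreeGroup

variable {α : Type*}

def ofNonzero (x : α) (a : ℤ) : FreeGroup (α × {a : ℤ // a ≠ 0}) :=
  if h : a = 0 then 1 else of (x, ⟨a, h⟩)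

theorem leftInverse_lift_telescope :
    LeftInverse
      (lift fun p : α × ℤ => ofNonzero p.1 p.2 * (ofNonzero p.1 (p.2 - 1))⁻¹)
      (lift fun p : α × {a : ℤ // a ≠ 0} => telescope (fun k => of (p.1, k)) p.2) := by
  intro u
  rw [← MonoidHom.comp_apply]
  refine DFunLike.congr_fun (g := MonoidHom.id _) (ext_hom _ _ fun ⟨x, a, ha⟩ => ?_) u
  have h0 : ofNonzero x 0 = 1 := dif_pos rfl
  simp only [MonoidHom.comp_apply, lift_apply_of, map_telescope, comp_def,
    telescope_mul_inv h0, MonoidHom.id_apply]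
  exact dif_neg ha

theorem injective_lift_telescope {G : Type*} [Group G] {h : α × ℤ → G}
    (hinj : Injective (lift h)) :
    Injective (lift fun p : α × {a : ℤ // a ≠ 0} => telescope (fun k => h (p.1, k)) p.2) := by
  have hcomp : lift (fun p : α × {a : ℤ // a ≠ 0} => telescope (fun k => h (p.1, k)) p.2) =
      (lift h).comp (lift fun p : α × {a : ℤ // a ≠ 0} => telescope (fun k => of (p.1, k)) p.2) :=
    ext_hom _ _ fun p => by simp [map_telescope, comp_def]
  rw [hcomp, MonoidHom.coe_comp]
  exact hinj.comp leftInverse_lift_telescope.injective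

end ChangeOfBasis

section Subgroups

open Subgroup
open scoped commutatorElement

variable {G : Type*} [Group G]

theorem isFreeBasis_range_s6 {κ : Type*} {c : κ → G} (hc : Injective (FreeGroup.lift c)) :
    IsFreeBasis (Set.range c) (closure (Set.range c)) := by
  have hc' : Injective c := by simpa [comp_def] using hc.comp FreeGroup.of_injective
  let e := Equiv.ofInjective c hc'
  have hcomp : FreeGroup.lift ((↑) : Set.range c → G) ∘ FreeGroup.freeGroupCongr e =
      FreeGroup.lift c :=
    congrArg DFunLike.coe (FreeGroup.ext_hom ((FreeGroup.lift _).comp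
      (FreeGroup.freeGroupCongr e).toMonoidHom) _ fun k => by simp [e])
  refine ⟨Injective.of_comp_right (hcomp ▸ hc) (FreeGroup.freeGroupCongr e).surjective, ?_⟩
  rw [FreeGroup.range_lift_eq_closure, Subtype.range_coe]

theorem closure_normal_of_conj_mem {s S : Set G} (hs : closure s = ⊤)
    (hconj : ∀ g ∈ s, ∀ n ∈ S, g * n * g⁻¹ ∈ closure S ∧ g⁻¹ * n * g ∈ closure S) :
    (closure S).Normal := by
  have hpres (g : G) (hg : ∀ n ∈ S, g * n * g⁻¹ ∈ closure S) :
      ∀ n ∈ closure S, g * n * g⁻¹ ∈ closure S :=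
    fun _ hn => (closure_le ((closure S).comap (MulAut.conj g).toMonoidHom)).2 hg hn
  rw [← normalizer_eq_top_iff, eq_top_iff, ← hs, closure_le]
  intro g hg n
  refine ⟨hpres g (fun m hm => (hconj g hg m hm).1) n, fun h => ?_⟩
  simpa [mul_assoc] using hpres g⁻¹ (fun m hm => by simpa using (hconj g hg m hm).2) _ h

theorem commutator_le_of_closure_eq_top_s6 {s : Set G} (hs : closure s = ⊤) {N : Subgroup G}
    [N.Normal] (h : ∀ a ∈ s, ∀ b ∈ s, ⁅a, b⁆ ∈ N) : commutator G ≤ N := by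
  rw [← Subgroup.Normal.quotient_commutative_iff_commutator_le]
  have hcomm : ∀ a ∈ QuotientGroup.mk' N '' s, ∀ b ∈ QuotientGroup.mk' N '' s, a * b = b * a := by
    rintro _ ⟨a, ha, rfl⟩ _ ⟨b, hb, rfl⟩
    rw [← commutatorElement_eq_one_iff_mul_comm, ← map_commutatorElement,
      QuotientGroup.mk'_apply, QuotientGroup.eq_one_iff]
    exact h a ha b hb
  have htop : closure (QuotientGroup.mk' N '' s) = ⊤ := by
    rw [← MonoidHom.map_closure, hs, ← MonoidHom.range_eq_map, QuotientGroup.range_mk']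
  have := isMulCommutative_closure hcomm
  exact ⟨⟨fun a b => setLike_mul_comm (htop ▸ mem_top a) (htop ▸ mem_top b)⟩⟩

end Subgroups

section FreeGroupFinTwo

open FreeGroup SemidirectProduct
open scoped commutatorElement

def powCommutator (a b : ℤ) : FreeGroup (Fin 2) :=
  (of 0 ^ a)⁻¹ * (of 1 ^ b)⁻¹ * of 0 ^ a * of 1 ^ b

theorem injective_lift_conj_zpow_of_one :
    Injective (lift fun j : ℤ => ((of 1 : FreeGroup (Fin 2)) ^ j)⁻¹ * of 0 * of 1 ^ j) := by
  let e : FreeGroup (Fin 2) →* FreeGroup (Unit × ℤ) ⋊[shiftAut Unit] Multiplicative ℤ :=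
    lift ![inl (of ((), 0)), inr (.ofAdd 1)]
  have hinj := injective_lift_conj_zpow (of 1) (fun _ => of 0) e (by simp [e]) fun _ => by simp [e]
  have hcomp : lift (fun j : ℤ => ((of 1 : FreeGroup (Fin 2)) ^ j)⁻¹ * of 0 * of 1 ^ j) =
      (lift fun p : Unit × ℤ => ((of 1 : FreeGroup (Fin 2)) ^ p.2)⁻¹ * of 0 * of 1 ^ p.2).comp
        (map (Prod.mk ())) :=
    ext_hom _ _ fun j => by simp
  rw [hcomp, MonoidHom.coe_comp]
  exact hinj.comp (map_injective (Prod.mk_right_injective ()))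

theorem injective_lift_conj_zpow_of_zero :
    Injective (lift fun p : {j : ℤ // j ≠ 0} × ℤ =>
      ((of 0 : FreeGroup ℤ) ^ p.2)⁻¹ * (of p.1.1 * (of 0)⁻¹) * of 0 ^ p.2) := by
  let e : FreeGroup ℤ →* FreeGroup ({j : ℤ // j ≠ 0} × ℤ) ⋊[shiftAut _] Multiplicative ℤ :=
    lift fun j => if h : j = 0 then inr (.ofAdd 1) else inl (of (⟨j, h⟩, 0)) * inr (.ofAdd 1)
  have het : e (of 0) = inr (.ofAdd 1) := by simp [e]
  have hef : ∀ j : {j : ℤ // j ≠ 0}, e (of j.1 * (of 0)⁻¹) = inl (of (j, 0)) := by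
    rintro ⟨j, hj⟩
    simp [e, hj]
  exact injective_lift_conj_zpow (α := {j : ℤ // j ≠ 0}) (of 0) (fun j => of j.1 * (of 0)⁻¹) e
    het hef

theorem injective_lift_powCommutator :
    Injective (lift fun p : {b : ℤ // b ≠ 0} × {a : ℤ // a ≠ 0} => powCommutator p.2 p.1) := by
  let ι : FreeGroup ℤ →* FreeGroup (Fin 2) := lift fun j => (of 1 ^ j)⁻¹ * of 0 * of 1 ^ j
  let g : {j : ℤ // j ≠ 0} × ℤ → FreeGroup ℤ :=
    fun p => (of 0 ^ p.2)⁻¹ * (of p.1.1 * (of 0)⁻¹) * of 0 ^ p.2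
  have hcomp : ι.comp (lift g) = lift (ι ∘ g) := ext_hom _ _ fun p => by simp
  have hinj : Injective (lift (ι ∘ g)) := by
    rw [← hcomp, MonoidHom.coe_comp]
    exact injective_lift_conj_zpow_of_one.comp injective_lift_conj_zpow_of_zero
  have htelescope (b : {b : ℤ // b ≠ 0}) :
      telescope (fun k => ι (g (b, k))) = fun a => powCommutator a b.1 := by
    refine (eq_telescope _ (by simp [powCommutator]) fun a => ?_).symm
    have hιg : ι (g (b, a)) =
        (of 0 ^ a)⁻¹ * ((of 1 ^ b.1)⁻¹ * of 0 * of 1 ^ b.1 * (of 0)⁻¹) * of 0 ^ a := by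
      simp [ι, g]
    rw [hιg]
    simp only [powCommutator]
    group
  convert injective_lift_telescope hinj using 3
  funext p
  exact (congrFun (htelescope p.1) p.2).symm

theorem powCommutator_eq_commutatorElement (a b : ℤ) :
    powCommutator a b = ⁅((of 0 : FreeGroup (Fin 2)) ^ a)⁻¹, (of 1 ^ b)⁻¹⁆ := by
  simp only [powCommutator, commutatorElement_def, inv_inv]

theorem conj_of_zero_powCommutator (a b : ℤ) :
    of 0 * powCommutator a b * (of 0)⁻¹ = powCommutator (a - 1) b * (powCommutator (-1) b)⁻¹ ∧
      (of 0)⁻¹ * powCommutator a b * of 0 = powCommutator (a + 1) b * (powCommutator 1 b)⁻¹ := by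
  constructor <;> simp only [powCommutator] <;> group

theorem conj_of_one_powCommutator (a b : ℤ) :
    of 1 * powCommutator a b * (of 1)⁻¹ = (powCommutator a (-1))⁻¹ * powCommutator a (b - 1) ∧
      (of 1)⁻¹ * powCommutator a b * of 1 = (powCommutator a 1)⁻¹ * powCommutator a (b + 1) := by
  constructor <;> simp only [powCommutator] <;> group

theorem powCommutator_mem_closure (a b : ℤ) :
    powCommutator a b ∈ Subgroup.closure
      (Set.range fun p : {b : ℤ // b ≠ 0} × {a : ℤ // a ≠ 0} => powCommutator p.2 p.1) := by
  by_cases ha : a = 0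
  · simp [ha, powCommutator]
  by_cases hb : b = 0
  · simp [hb, powCommutator]
  exact Subgroup.subset_closure ⟨(⟨b, hb⟩, ⟨a, ha⟩), rfl⟩

theorem closure_range_powCommutator :
    Subgroup.closure
      (Set.range fun p : {b : ℤ // b ≠ 0} × {a : ℤ // a ≠ 0} => powCommutator p.2 p.1) =
      commutator (FreeGroup (Fin 2)) := by
  set T := Subgroup.closure
    (Set.range fun p : {b : ℤ // b ≠ 0} × {a : ℤ // a ≠ 0} => powCommutator p.2 p.1)
  have hmem := powCommutator_mem_closure
  refine le_antisymm ((Subgroup.closure_le _).2 ?_) ?_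
  · rintro _ ⟨⟨b, a⟩, rfl⟩
    show powCommutator a b ∈ commutator _
    rw [powCommutator_eq_commutatorElement]
    exact Subgroup.commutator_mem_commutator (Subgroup.mem_top _) (Subgroup.mem_top _)
  have : T.Normal := by
    refine closure_normal_of_conj_mem (closure_range_of _) ?_
    simp only [Set.forall_mem_range, Fin.forall_fin_two, Prod.forall, Subtype.forall]
    refine ⟨fun b _ a _ => ?_, fun b _ a _ => ?_⟩
    · rw [(conj_of_zero_powCommutator a b).1, (conj_of_zero_powCommutator a b).2]
      exact ⟨mul_mem (hmem _ _) (inv_mem (hmem _ _)), mul_mem (hmem _ _) (inv_mem (hmem _ _))⟩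
    · rw [(conj_of_one_powCommutator a b).1, (conj_of_one_powCommutator a b).2]
      exact ⟨mul_mem (inv_mem (hmem _ _)) (hmem _ _), mul_mem (inv_mem (hmem _ _)) (hmem _ _)⟩
  have hxy : ⁅(of 0 : FreeGroup (Fin 2)), of 1⁆ = powCommutator (-1) (-1) := by
    simp only [powCommutator, commutatorElement_def]
    group
  refine commutator_le_of_closure_eq_top_s6 (closure_range_of _) ?_
  simp only [Set.forall_mem_range, Fin.forall_fin_two, commutatorElement_self,
    ← commutatorElement_inv (of 0 : FreeGroup (Fin 2)) (of 1), hxy]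
  exact ⟨⟨one_mem _, hmem _ _⟩, inv_mem (hmem _ _), one_mem _⟩

end FreeGroupFinTwo

/-- The commutator subgroup of the free group `F₂` on `x₁, x₂` is freely generated by
the commutators `[x₁^{k₁}, x₂^{k₂}]` with `k₁, k₂` nonzero integers. -/
theorem stmt6 :
    IsFreeBasis
      {g : FreeGroup (Fin 2) | ∃ k₁ k₂ : ℤ, k₁ ≠ 0 ∧ k₂ ≠ 0 ∧
        g = (FreeGroup.of 0 ^ k₁)⁻¹ * (FreeGroup.of 1 ^ k₂)⁻¹ *
              FreeGroup.of 0 ^ k₁ * FreeGroup.of 1 ^ k₂}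
      (commutator (FreeGroup (Fin 2))) := by
  have hS : {g : FreeGroup (Fin 2) | ∃ k₁ k₂ : ℤ, k₁ ≠ 0 ∧ k₂ ≠ 0 ∧ g = powCommutator k₁ k₂} =
      Set.range fun p : {b : ℤ // b ≠ 0} × {a : ℤ // a ≠ 0} => powCommutator p.2 p.1 := by
    ext g
    constructor
    · rintro ⟨a, b, ha, hb, rfl⟩
      exact ⟨(⟨b, hb⟩, ⟨a, ha⟩), rfl⟩
    · rintro ⟨⟨⟨b, hb⟩, a, ha⟩, rfl⟩
      exact ⟨a, b, ha, hb, rfl⟩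
  rw [← closure_range_powCommutator]
  exact hS ▸ isFreeBasis_range_s6 injective_lift_powCommutator
end

section
/- Let F be a free group, A ≤ F a subgroup, and B ⊴ F a normal subgroup with F = B ⋊ A (internal semidirect product: B ∩ A = 1 and BA = F). Suppose B is freely generated by a set S on which A acts freely by conjugation (i.e., the conjugation action of A permutes S and the action on S is free), and let S' ⊆ S contain exactly one element from each A-orbit. Then F is the internal free product of the subgroup generated by S' (which is free on S') and A. -/
namespace IsFreeBasis

variable {G : Type*} [Group G] {S : Set G} {H : Subgroup G}

noncomputable def basis (h : IsFreeBasis S H) : FreeGroupBasis S H :=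
  .ofRepr ((MonoidHom.ofInjective h.1).trans (MulEquiv.subgroupCongr h.2)).symm

@[simp]
theorem coe_basis_apply (h : IsFreeBasis S H) (s : S) : (h.basis s : G) = s :=
  FreeGroup.lift_apply_of

end IsFreeBasis

theorem Subgroup.isComplement'_of_inf_eq_bot_of_sup_eq_top {G : Type*} [Group G]
    {N K : Subgroup G} [N.Normal] (hinf : N ⊓ K = ⊥) (hsup : N ⊔ K = ⊤) : N.IsComplement' K :=
  isComplement'_of_disjoint_and_mul_eq_univ (disjoint_iff.mpr hinf)
    (by rw [← normal_mul, hsup, coe_top])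

open Monoid Coprod

structure IsFreeConjTransversal {G : Type*} [Group G] (A : Subgroup G) (S S' : Set G) :
    Prop where
  conj_mem : ∀ a ∈ A, ∀ s ∈ S, a⁻¹ * s * a ∈ S
  eq_one_of_conj_eq : ∀ a ∈ A, ∀ s ∈ S, a⁻¹ * s * a = s → a = 1
  subset : S' ⊆ S
  existsUnique : ∀ s ∈ S, ∃! s', s' ∈ S' ∧ ∃ a ∈ A, s' = a⁻¹ * s * a

namespace IsFreeConjTransversal

variable {G : Type*} [Group G] {A B : Subgroup G} {S S' : Set G}

theorem mul_mul_inv_mem (hT : IsFreeConjTransversal A S S') (p : S' × A) :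
    (p.2 : G) * p.1 * (p.2 : G)⁻¹ ∈ S := by
  simpa using hT.conj_mem _ (inv_mem p.2.2) _ (hT.subset p.1.2)

theorem conj_injective (hT : IsFreeConjTransversal A S S') :
    Function.Injective fun p : S' × A ↦ (p.2 : G) * p.1 * (p.2 : G)⁻¹ := by
  rintro ⟨⟨s, hs⟩, ⟨a, ha⟩⟩ ⟨⟨t, ht⟩, ⟨b, hb⟩⟩ (h : a * s * a⁻¹ = b * t * b⁻¹)
  have hst : s = t := (hT.existsUnique _ (hT.mul_mul_inv_mem (⟨s, hs⟩, ⟨a, ha⟩))).unique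
    ⟨hs, a, ha, by group⟩ ⟨ht, b, hb, by rw [h]; group⟩
  subst hst
  have hab : a⁻¹ * b = 1 := hT.eq_one_of_conj_eq _ (mul_mem (inv_mem ha) hb) s (hT.subset hs) <| by
    calc (a⁻¹ * b)⁻¹ * s * (a⁻¹ * b) = b⁻¹ * (a * s * a⁻¹) * b := by group
      _ = s := by rw [h]; group
  rw [inv_mul_eq_one] at hab
  simp [hab]

theorem conj_surjective (hT : IsFreeConjTransversal A S S') (s : S) :
    ∃ p : S' × A, (p.2 : G) * p.1 * (p.2 : G)⁻¹ = s := by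
  obtain ⟨s', ⟨hs', a, ha, rfl⟩, -⟩ := hT.existsUnique s s.2
  exact ⟨(⟨_, hs'⟩, ⟨a, ha⟩), by group⟩

noncomputable def conjEquiv (hT : IsFreeConjTransversal A S S') : S' × A ≃ S :=
  .ofBijective (fun p ↦ ⟨_, hT.mul_mul_inv_mem p⟩)
    ⟨fun _ _ h ↦ hT.conj_injective (congrArg Subtype.val h),
      fun s ↦ (hT.conj_surjective s).imp fun _ h ↦ Subtype.ext h⟩

noncomputable def basis (hT : IsFreeConjTransversal A S S') (hSB : IsFreeBasis S B) :
    FreeGroupBasis (S' × A) B :=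
  hSB.basis.reindex hT.conjEquiv.symm

@[simp]
theorem coe_basis_apply (hT : IsFreeConjTransversal A S S') (hSB : IsFreeBasis S B)
    (p : S' × A) : (hT.basis hSB p : G) = p.2 * p.1 * (p.2 : G)⁻¹ :=
  hSB.coe_basis_apply (hT.conjEquiv p)

noncomputable def toCoprod (hT : IsFreeConjTransversal A S S') (hSB : IsFreeBasis S B) :
    B →* FreeGroup S' ∗ A :=
  (hT.basis hSB).lift fun p ↦ inr p.2 * inl (.of p.1) * (inr p.2)⁻¹

theorem toCoprod_basis (hT : IsFreeConjTransversal A S S') (hSB : IsFreeBasis S B)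
    (p : S' × A) : hT.toCoprod hSB (hT.basis hSB p) = inr p.2 * inl (.of p.1) * (inr p.2)⁻¹ := by
  simp [toCoprod]

/-- The action `B.normalizerMonoidHom ∘ inclusion` is conjugation, the one underlying
`SemidirectProduct.mulEquivSubgroup`. -/
theorem toCoprod_conj [B.Normal] (hT : IsFreeConjTransversal A S S') (hSB : IsFreeBasis S B)
    (a : A) :
    (hT.toCoprod hSB).comp (B.normalizerMonoidHom.comp
        (Subgroup.inclusion (B.normalizer_eq_top ▸ le_top)) a).toMonoidHom =
      (MulAut.conj (inr a)).toMonoidHom.comp (hT.toCoprod hSB) := by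
  refine (hT.basis hSB).ext_hom _ _ fun p ↦ ?_
  have hconj : B.normalizerMonoidHom (Subgroup.inclusion (B.normalizer_eq_top ▸ le_top) a)
      (hT.basis hSB p) = hT.basis hSB (p.1, a * p.2) := by
    ext
    simp only [Subgroup.normalizerMonoidHom_apply_apply_coe, Subgroup.coe_inclusion,
      coe_basis_apply, Subgroup.coe_mul]
    group
  simp only [MonoidHom.coe_comp, Function.comp_apply, MulEquiv.toMonoidHom_eq_coe,
    MonoidHom.coe_coe, hconj, toCoprod_basis, map_mul, mul_inv_rev, MulAut.conj_apply]
  group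

variable [B.Normal]

noncomputable def retraction (hc : B.IsComplement' A) (hT : IsFreeConjTransversal A S S')
    (hSB : IsFreeBasis S B) : G →* FreeGroup S' ∗ A :=
  (SemidirectProduct.lift (hT.toCoprod hSB) inr (hT.toCoprod_conj hSB)).comp
    (SemidirectProduct.mulEquivSubgroup hc).symm.toMonoidHom

theorem retraction_comp_lift (hc : B.IsComplement' A) (hT : IsFreeConjTransversal A S S')
    (hSB : IsFreeBasis S B) :
    (hT.retraction hc hSB).comp (lift (FreeGroup.lift ((↑) : S' → G)) A.subtype) =
      MonoidHom.id _ := by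
  set e := SemidirectProduct.mulEquivSubgroup hc
  refine Coprod.hom_ext (FreeGroup.ext_hom _ _ fun s ↦ ?_) (MonoidHom.ext fun a ↦ ?_)
  · have hs : e.symm s = .inl (hT.basis hSB (s, 1)) := e.symm_apply_eq.mpr (by simp [e])
    simp only [retraction, MonoidHom.comp_apply, MulEquiv.coe_toMonoidHom, lift_apply_inl,
      FreeGroup.lift_apply_of, MonoidHom.id_apply]
    rw [hs]
    simp [toCoprod_basis]
  · have ha : e.symm a = .inr a := e.symm_apply_eq.mpr (by simp [e])
    simp only [retraction, MonoidHom.comp_apply, MulEquiv.coe_toMonoidHom, lift_apply_inr,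
      Subgroup.subtype_apply, MonoidHom.id_apply]
    rw [ha]
    simp

theorem lift_comp_retraction (hc : B.IsComplement' A) (hT : IsFreeConjTransversal A S S')
    (hSB : IsFreeBasis S B) :
    (lift (FreeGroup.lift ((↑) : S' → G)) A.subtype).comp (hT.retraction hc hSB) =
      MonoidHom.id _ := by
  set e := SemidirectProduct.mulEquivSubgroup hc
  suffices h : (lift (FreeGroup.lift ((↑) : S' → G)) A.subtype).comp
      (SemidirectProduct.lift (hT.toCoprod hSB) inr (hT.toCoprod_conj hSB)) = e.toMonoidHom by
    ext g
    simpa only [retraction, MonoidHom.comp_apply, MulEquiv.coe_toMonoidHom, MonoidHom.id_apply,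
      e.apply_symm_apply] using DFunLike.congr_fun h (e.symm g)
  refine SemidirectProduct.hom_ext ((hT.basis hSB).ext_hom _ _ fun p ↦ ?_)
    (MonoidHom.ext fun a ↦ ?_)
  · simp [toCoprod_basis, e]
  · simp [e]

theorem lift_bijective (hc : B.IsComplement' A) (hT : IsFreeConjTransversal A S S')
    (hSB : IsFreeBasis S B) :
    Function.Bijective (lift (FreeGroup.lift ((↑) : S' → G)) A.subtype) :=
  Function.bijective_iff_has_inverse.mpr ⟨hT.retraction hc hSB,
    DFunLike.congr_fun (hT.retraction_comp_lift hc hSB),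
    DFunLike.congr_fun (hT.lift_comp_retraction hc hSB)⟩

end IsFreeConjTransversal

/-- Let `F` be a free group, `A ≤ F` a subgroup and `B ⊴ F` a normal subgroup with
`F = B ⋊ A`.  If `B` is freely generated by a set `S` on which `A` acts freely by
conjugation and `S' ⊆ S` contains exactly one element of each `A`-orbit, then `F`
is the internal free product of the subgroup generated by `S'` and `A`. -/
theorem stmt8 (α : Type) (A B : Subgroup (FreeGroup α)) [B.Normal]
    (hdisj : B ⊓ A = ⊥) (hgen : B ⊔ A = ⊤)
    (S : Set (FreeGroup α)) (hSB : IsFreeBasis S B)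
    (hact : ∀ a ∈ A, ∀ s ∈ S, a⁻¹ * s * a ∈ S)
    (hfree : ∀ a ∈ A, ∀ s ∈ S, a⁻¹ * s * a = s → a = 1)
    (S' : Set (FreeGroup α)) (hS'S : S' ⊆ S)
    (horbit : ∀ s ∈ S, ∃! s', s' ∈ S' ∧ ∃ a ∈ A, s' = a⁻¹ * s * a) :
    Function.Bijective
      (Monoid.Coprod.lift (FreeGroup.lift ((↑) : S' → FreeGroup α)) A.subtype) :=
  IsFreeConjTransversal.lift_bijective
    (Subgroup.isComplement'_of_inf_eq_bot_of_sup_eq_top hdisj hgen)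
    ⟨hact, hfree, hS'S, horbit⟩ hSB
end

section
/- Fix n ≥ 2. Let K be the normal closure of x₁ in the free group Fₙ on x₁,…,xₙ, and let B = K ∩ [Fₙ,Fₙ]. Then B is freely generated by the set { (x₁^{k₁} w)⁻¹ [x₁, x_j] (x₁^{k₁} w) : 1 < j ≤ n, k₁ ∈ ℤ, w in the subgroup generated by x₂,…,xₙ }. -/
/-!
`B` is the kernel of `φ : F → F(α ∖ {t}) × ℤ`, which has the section `σ (w, k) = t ^ k * w`.
The Reidemeister–Schreier rewriting process is the left component `c` of a homomorphism
`F →* A ≀ᵣ Q` into the regular wreath product, where `Q` is the target of `φ` and `A` is the free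
group on the proposed basis; on `ker φ`, `g ↦ c g 1` is a homomorphism `ρ : ker φ →* A`.
If every generator is rewritten correctly (`x_j` at height `m` becomes a ladder of `m` conjugated
commutators), then evaluating `ρ g` on the basis gives back `g`, so the basis generates `ker φ`;
and `ρ (σ(q)⁻¹ [t, x_j] σ(q)) = (j, q)`, so `ρ` is a retraction and the basis is free.
Since the basis lies in `⟨⟨t⟩⟩ ∩ [F, F]`, that intersection is `ker φ`.
-/

open FreeGroup
open scoped commutatorElement

theorem isFreeBasis_range_of_retraction {G ι : Type*} [Group G] {b : ι → G} {H : Subgroup G}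
    (hb : Subgroup.closure (Set.range b) = H) (ρ : H →* FreeGroup ι)
    (hρ : ∀ i (hi : b i ∈ H), ρ ⟨b i, hi⟩ = of i) : IsFreeBasis (Set.range b) H := by
  have hlift (x : FreeGroup ι) : lift b x ∈ H := by
    rw [← hb, ← range_lift_eq_closure]
    exact ⟨x, rfl⟩
  have hretract : Function.LeftInverse ρ ((lift b).codRestrict H hlift) :=
    DFunLike.congr_fun (f := ρ.comp _) (g := MonoidHom.id _) (ext_hom _ _ fun i => by simp [hρ])
  have hinj : Function.Injective (lift b) := fun x y hxy => hretract.injective (Subtype.ext hxy)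
  have hb_inj : Function.Injective b := fun i j hij =>
    of_injective (hinj (by simpa only [lift_apply_of] using hij))
  have hcoe : lift ((↑) : Set.range b → G) =
      (lift b).comp (map (Equiv.ofInjective b hb_inj).symm) :=
    ext_hom _ _ fun s => by simp [Equiv.apply_ofInjective_symm]
  refine ⟨?_, ?_⟩
  · rw [hcoe]
    exact hinj.comp (map_injective (Equiv.injective _))
  · rw [range_lift_eq_closure, Subtype.range_coe, hb]

/-- `∏_{0 ≤ s < m} a s`, extended to negative `m` so that `zPartialProd_succ` holds on all of `ℤ`. -/
def zPartialProd {G : Type*} [Group G] (a : ℤ → G) : ℤ → G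
  | .ofNat n => ((List.range n).map fun s : ℕ => a s).prod
  | .negSucc n => ((List.range (n + 1)).map fun s : ℕ => (a (.negSucc s))⁻¹).prod

section zPartialProd
variable {G : Type*} [Group G] (a : ℤ → G)

@[simp] theorem zPartialProd_zero : zPartialProd a 0 = 1 := rfl

theorem zPartialProd_succ (m : ℤ) : zPartialProd a (m + 1) = zPartialProd a m * a m := by
  rcases m with n | (_ | n)
  · show zPartialProd a (.ofNat (n + 1)) = _
    simp [zPartialProd, List.range_succ]
  · simp [zPartialProd]
  · show zPartialProd a (.negSucc n) = _
    simp [zPartialProd, List.range_succ, mul_assoc]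

theorem map_zPartialProd_eq {G' : Type*} [Group G'] (β : G →* G') {V : ℤ → G'} (h₀ : V 0 = 1)
    (hsucc : ∀ m, V (m + 1) = V m * β (a m)) (m : ℤ) : β (zPartialProd a m) = V m := by
  induction m using Int.induction_on with
  | zero => simp [h₀]
  | succ m ih => rw [zPartialProd_succ, _root_.map_mul, ih, hsucc]
  | pred m ih =>
    have h := zPartialProd_succ a (-m - 1)
    have hV := hsucc (-m - 1)
    rw [sub_add_cancel] at h hV
    rw [eq_mul_inv_of_mul_eq h.symm, _root_.map_mul, _root_.map_inv, ih, hV, mul_inv_cancel_right]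

end zPartialProd

namespace FreeGroup

section WreathCocycle
variable {α Q A : Type*} [Group Q] [Group A] (φ : FreeGroup α →* Q) (f : α → Q → A)

def toWreath : FreeGroup α →* A ≀ᵣ Q := lift fun i => ⟨f i, φ (of i)⟩

@[simp] theorem toWreath_right (g : FreeGroup α) : (toWreath φ f g).right = φ g :=
  DFunLike.congr_fun (f := RegularWreathProduct.rightHom.comp (toWreath φ f)) (g := φ)
    (ext_hom _ _ fun i => by simp [toWreath]) g

def wreathCocycle (g : FreeGroup α) : Q → A := (toWreath φ f g).left

variable {φ f}

@[simp] theorem wreathCocycle_of (i : α) : wreathCocycle φ f (of i) = f i := by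
  simp [wreathCocycle, toWreath]

@[simp] theorem wreathCocycle_one : wreathCocycle φ f 1 = 1 := by
  simp [wreathCocycle]

theorem wreathCocycle_mul (g₁ g₂ : FreeGroup α) (x : Q) :
    wreathCocycle φ f (g₁ * g₂) x =
      wreathCocycle φ f g₁ x * wreathCocycle φ f g₂ ((φ g₁)⁻¹ * x) := by
  simp [wreathCocycle]

theorem wreathCocycle_inv (g : FreeGroup α) (x : Q) :
    wreathCocycle φ f g⁻¹ x = (wreathCocycle φ f g (φ g * x))⁻¹ := by
  simp [wreathCocycle]

variable (φ f) in
def kerCocycle : φ.ker →* A where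
  toFun g := wreathCocycle φ f g 1
  map_one' := by simp
  map_mul' g h := by simp [wreathCocycle_mul, MonoidHom.mem_ker.mp g.2]

theorem map_wreathCocycle (β : A →* FreeGroup α) {σ : Q → FreeGroup α}
    (hσ : ∀ i x, β (f i x) = (σ x)⁻¹ * of i * σ ((φ (of i))⁻¹ * x))
    (g : FreeGroup α) (x : Q) : β (wreathCocycle φ f g x) = (σ x)⁻¹ * g * σ ((φ g)⁻¹ * x) := by
  induction g using FreeGroup.induction_on generalizing x with
  | C1 => simp
  | of i => simp [hσ]
  | inv_of i _ => simp [wreathCocycle_inv, hσ, mul_assoc]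
  | mul g₁ g₂ ih₁ ih₂ => simp [wreathCocycle_mul, ih₁, ih₂, mul_assoc]

theorem ker_le_range_of_transversal (β : A →* FreeGroup α) {σ : Q → FreeGroup α}
    (hσ : ∀ i x, β (f i x) = (σ x)⁻¹ * of i * σ ((φ (of i))⁻¹ * x)) (hσ₁ : σ 1 = 1) :
    φ.ker ≤ β.range := fun g hg =>
  ⟨kerCocycle φ f ⟨g, hg⟩, by
    simpa [kerCocycle, hσ₁, MonoidHom.mem_ker.mp hg] using map_wreathCocycle β hσ g 1⟩

end WreathCocycle

section SplitGenerator
variable {α : Type*} (t : α)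

abbrev SplitQuotient := FreeGroup {i // i ≠ t} × Multiplicative ℤ

def splitTransversal (q : SplitQuotient t) : FreeGroup α :=
  of t ^ q.2.toAdd * map Subtype.val q.1

def tCommutator (j : α) : FreeGroup α := (of t)⁻¹ * (of j)⁻¹ * of t * of j

def conjCommutator (x : {i // i ≠ t} × SplitQuotient t) : FreeGroup α :=
  (splitTransversal t x.2)⁻¹ * tCommutator t x.1 * splitTransversal t x.2

variable {t}

theorem tCommutator_mem (j : α) :
    tCommutator t j ∈ Subgroup.normalClosure {of t} ⊓ commutator (FreeGroup α) := by
  have ht : of t ∈ Subgroup.normalClosure {of t} := Subgroup.subset_normalClosure rfl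
  refine Subgroup.mem_inf.mpr ⟨?_, ?_⟩
  · rw [tCommutator, mul_assoc (of t)⁻¹, mul_assoc (of t)⁻¹]
    exact mul_mem (inv_mem ht) (Subgroup.normalClosure_normal.conj_mem' _ ht _)
  · have : tCommutator t j = ⁅(of t)⁻¹, (of j)⁻¹⁆ := by simp [tCommutator, commutatorElement_def]
    rw [this, commutator_def]
    exact Subgroup.commutator_mem_commutator (Subgroup.mem_top _) (Subgroup.mem_top _)

theorem range_conjCommutator : Set.range (conjCommutator t) =
    {g | ∃ j, j ≠ t ∧ ∃ k : ℤ, ∃ w ∈ Subgroup.closure (of '' {i | i ≠ t}),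
      g = (of t ^ k * w)⁻¹ * ((of t)⁻¹ * (of j)⁻¹ * of t * of j) * (of t ^ k * w)} := by
  have hw : Subgroup.closure (of '' {i | i ≠ t}) = (map (Subtype.val : {i // i ≠ t} → α)).range := by
    rw [map_eq_lift, range_lift_eq_closure, Set.range_comp, Subtype.range_coe_subtype]
  ext g
  simp only [hw, MonoidHom.mem_range]
  constructor
  · rintro ⟨⟨j, u, m⟩, rfl⟩
    exact ⟨j, j.2, m.toAdd, _, ⟨u, rfl⟩, rfl⟩
  · rintro ⟨j, hj, k, _, ⟨u, rfl⟩, rfl⟩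
    exact ⟨(⟨j, hj⟩, u, .ofAdd k), rfl⟩

variable [DecidableEq α]

variable (t) in
def splitHom : FreeGroup α →* SplitQuotient t :=
  lift fun i => if h : i = t then (1, .ofAdd 1) else (of ⟨i, h⟩, 1)

variable (t) in
/-- At `q = (u, m)`, the generator `x_j` is rewritten as the product of `m` inverted basis
elements that equals `(σ q)⁻¹ * x_j * σ (x_j⁻¹ * u, m)`, see `lift_conjCommutator_splitRewrite`. -/
def splitRewrite (i : α) (q : SplitQuotient t) :
    FreeGroup ({i // i ≠ t} × SplitQuotient t) :=
  if h : i = t then 1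
  else zPartialProd (fun s => (of (⟨i, h⟩, ((of ⟨i, h⟩)⁻¹ * q.1, .ofAdd s)))⁻¹) q.2.toAdd

@[simp] theorem splitHom_of_self : splitHom t (of t) = (1, .ofAdd 1) := by
  simp [splitHom]

@[simp] theorem splitHom_of_val (j : {i // i ≠ t}) : splitHom t (of j.1) = (of j, 1) := by
  simp [splitHom, j.2]

@[simp] theorem splitHom_map_val (u : FreeGroup {i // i ≠ t}) :
    splitHom t (map Subtype.val u) = (u, 1) :=
  DFunLike.congr_fun (f := (splitHom t).comp (map Subtype.val)) (g := MonoidHom.inl _ _)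
    (ext_hom _ _ fun j => by simp) u

@[simp] theorem splitHom_tCommutator (j : α) : splitHom t (tCommutator t j) = 1 := by
  refine Prod.ext ?_ ?_ <;> simp [tCommutator, mul_comm]

@[simp] theorem splitHom_splitTransversal (q : SplitQuotient t) :
    splitHom t (splitTransversal t q) = q := by
  simp [splitTransversal, ← Int.ofAdd_mul]

theorem conjCommutator_mem_ker (x : {i // i ≠ t} × SplitQuotient t) :
    conjCommutator t x ∈ (splitHom t).ker := by
  simp [conjCommutator]

@[simp] theorem splitRewrite_self : splitRewrite t t = 1 := by
  funext q
  simp [splitRewrite]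

theorem splitRewrite_val (j : {i // i ≠ t}) (q : SplitQuotient t) :
    splitRewrite t j.1 q =
      zPartialProd (fun s => (of (j, ((of j)⁻¹ * q.1, .ofAdd s)))⁻¹) q.2.toAdd := by
  simp [splitRewrite, j.2]

theorem lift_conjCommutator_splitRewrite (i : α) (q : SplitQuotient t) :
    lift (conjCommutator t) (splitRewrite t i q) =
      (splitTransversal t q)⁻¹ * of i * splitTransversal t ((splitHom t (of i))⁻¹ * q) := by
  by_cases hi : i = t
  · subst hi
    simp only [splitRewrite_self, Pi.one_apply, _root_.map_one, splitTransversal, splitHom_of_self,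
      Prod.fst_mul, Prod.snd_mul, Prod.inv_mk, inv_one, one_mul, toAdd_mul, toAdd_inv, toAdd_ofAdd]
    group
  · lift i to {i // i ≠ t} using hi
    rw [splitRewrite_val]
    convert map_zPartialProd_eq _ (lift (conjCommutator t)) (V := fun k =>
      (splitTransversal t (q.1, .ofAdd k))⁻¹ * of i.1 *
        splitTransversal t ((of i)⁻¹ * q.1, .ofAdd k)) ?_ ?_ q.2.toAdd using 1
    · simp [splitTransversal]
    · simp [splitTransversal]
    · intro m
      simp only [splitTransversal, conjCommutator, tCommutator, toAdd_ofAdd, _root_.map_mul,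
        _root_.map_inv, map.of, lift_apply_of]
      group

theorem closure_range_conjCommutator :
    Subgroup.closure (Set.range (conjCommutator t)) = (splitHom t).ker := by
  refine le_antisymm ?_ ?_
  · rw [Subgroup.closure_le]
    rintro _ ⟨x, rfl⟩
    exact conjCommutator_mem_ker x
  · rw [← range_lift_eq_closure]
    exact ker_le_range_of_transversal _ lift_conjCommutator_splitRewrite
      (by simp [splitTransversal])

theorem ker_splitHom :
    (splitHom t).ker = Subgroup.normalClosure {of t} ⊓ commutator (FreeGroup α) := by
  refine le_antisymm ?_ ?_
  · rw [← closure_range_conjCommutator, Subgroup.closure_le]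
    rintro _ ⟨x, rfl⟩
    exact (Subgroup.normal_inf_normal _ _).conj_mem' _ (tCommutator_mem _) _
  · rintro g ⟨hncl, hcomm⟩
    refine Prod.ext ?_ ?_
    · refine Subgroup.normalClosure_le_normal (N := ((MonoidHom.fst _ _).comp (splitHom t)).ker)
        ?_ hncl
      simp
    · exact Abelianization.commutator_subset_ker ((MonoidHom.snd _ _).comp (splitHom t)) hcomm

theorem wreathCocycle_zpow_of_self (k : ℤ) (q : SplitQuotient t) :
    wreathCocycle (splitHom t) (splitRewrite t) (of t ^ k) q = 1 := by
  have hof : toWreath (splitHom t) (splitRewrite t) (of t) =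
      RegularWreathProduct.inl (splitHom t (of t)) := by
    simp [toWreath, RegularWreathProduct.inl]
  rw [wreathCocycle, map_zpow, hof, ← map_zpow, RegularWreathProduct.left_inl, Pi.one_apply]

theorem wreathCocycle_map_val (u v : FreeGroup {i // i ≠ t}) :
    wreathCocycle (splitHom t) (splitRewrite t) (map Subtype.val u) (v, 1) = 1 := by
  induction u using FreeGroup.induction_on generalizing v with
  | C1 => simp
  | of j => simp [splitRewrite_val]
  | inv_of j _ => simp [wreathCocycle_inv, splitRewrite_val]
  | mul u₁ u₂ ih₁ ih₂ => simp [wreathCocycle_mul, ih₁, ih₂]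

theorem wreathCocycle_splitTransversal_self (q : SplitQuotient t) :
    wreathCocycle (splitHom t) (splitRewrite t) (splitTransversal t q) q = 1 := by
  have hq : (splitHom t (of t ^ q.2.toAdd))⁻¹ * q = (q.1, 1) := by
    ext <;> simp [← Int.ofAdd_mul]
  rw [splitTransversal, wreathCocycle_mul, wreathCocycle_zpow_of_self, hq, wreathCocycle_map_val,
    one_mul]

theorem wreathCocycle_tCommutator (j : {i // i ≠ t}) (q : SplitQuotient t) :
    wreathCocycle (splitHom t) (splitRewrite t) (tCommutator t j) q = of (j, q) := by
  simp [tCommutator, wreathCocycle_mul, wreathCocycle_inv, splitRewrite_val, add_comm (1 : ℤ),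
    zPartialProd_succ]

theorem kerCocycle_conjCommutator (x : {i // i ≠ t} × SplitQuotient t) :
    kerCocycle (splitHom t) (splitRewrite t) ⟨conjCommutator t x, conjCommutator_mem_ker x⟩ =
      of x := by
  simp [kerCocycle, conjCommutator, wreathCocycle_mul, wreathCocycle_inv,
    wreathCocycle_splitTransversal_self, wreathCocycle_tCommutator]

end SplitGenerator

theorem isFreeBasis_conjCommutators {α : Type*} [DecidableEq α] (t : α) :
    IsFreeBasis {g | ∃ j, j ≠ t ∧ ∃ k : ℤ, ∃ w ∈ Subgroup.closure (of '' {i | i ≠ t}),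
        g = (of t ^ k * w)⁻¹ * ((of t)⁻¹ * (of j)⁻¹ * of t * of j) * (of t ^ k * w)}
      (Subgroup.normalClosure {of t} ⊓ commutator (FreeGroup α)) := by
  rw [← range_conjCommutator, ← ker_splitHom]
  exact isFreeBasis_range_of_retraction closure_range_conjCommutator (kerCocycle _ _)
    fun x _ => kerCocycle_conjCommutator x

end FreeGroup

/-- For `n ≥ 2`, let `K` be the normal closure of `x₀` in the free group on `Fin n`
and `B = K ∩ [Fₙ,Fₙ]`.  Then `B` is freely generated by the elements
`(x₀^{k} w)⁻¹ [x₀, x_j] (x₀^{k} w)` with `j > 0`, `k ∈ ℤ`, and `w` in the subgroup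
generated by `x₁, …, x_{n-1}`. -/
theorem stmt9 (n : ℕ) (hn : 2 ≤ n) :
    IsFreeBasis
      {g : FreeGroup (Fin n) | ∃ j : Fin n, (0 : ℕ) < (j : ℕ) ∧ ∃ k : ℤ,
        ∃ w ∈ Subgroup.closure (FreeGroup.of '' {i : Fin n | (i : ℕ) ≠ 0}),
          g = (FreeGroup.of (⟨0, by omega⟩ : Fin n) ^ k * w)⁻¹ *
                ((FreeGroup.of (⟨0, by omega⟩ : Fin n))⁻¹ * (FreeGroup.of j)⁻¹ *
                  FreeGroup.of (⟨0, by omega⟩ : Fin n) * FreeGroup.of j) *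
              (FreeGroup.of (⟨0, by omega⟩ : Fin n) ^ k * w)}
      (Subgroup.normalClosure {FreeGroup.of (⟨0, by omega⟩ : Fin n)} ⊓
        commutator (FreeGroup (Fin n))) := by
  have h := isFreeBasis_conjCommutators (⟨0, by omega⟩ : Fin n)
  simp only [ne_eq, Fin.ext_iff] at h
  simpa only [Nat.pos_iff_ne_zero] using h
end

section
/- Let S = { y_{n,m} : n, m ∈ ℤ } be a set of formal symbols and F(S) the free group on S. Then F(S) is freely generated by the set S' = { y_{0,0} } ∪ { y_{n+1,m}⁻¹ y_{n,m} : n, m ∈ ℤ } ∪ { y_{0,m+1}⁻¹ y_{0,m} : m ∈ ℤ }. -/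
/-!
Write `b n m = y_{n+1,m}⁻¹ y_{n,m}` and `c m = y_{0,m+1}⁻¹ y_{0,m}`. Walking from `y_{0,0}` along
the column `n = 0` with the `c m` and then along each row with the `b n m` expresses every
`y_{n,m}` through `S'`, so `S'` generates. The same walk, performed in the free group on `S'`,
defines a homomorphism back which fixes `S'`; hence the canonical map from the free group on `S'`
is an isomorphism.
-/

theorem isFreeBasis_top_of_closure_eq_top {G : Type*} [Group G] {S : Set G}
    (hS : Subgroup.closure S = ⊤) (ψ : G →* FreeGroup S) (hψ : ∀ s : S, ψ s = FreeGroup.of s) :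
    IsFreeBasis S ⊤ := by
  set φ := FreeGroup.lift ((↑) : S → G)
  have hψφ : ψ.comp φ = MonoidHom.id _ := FreeGroup.ext_hom _ _ fun s => by simp [φ, hψ]
  have hφψ : φ.comp ψ = MonoidHom.id G :=
    MonoidHom.eq_of_eqOn_dense hS fun s hs => by simp [φ, hψ ⟨s, hs⟩]
  refine ⟨Function.LeftInverse.injective (g := ψ) (DFunLike.congr_fun hψφ), ?_⟩
  exact MonoidHom.range_eq_top.2 (Function.RightInverse.surjective (DFunLike.congr_fun hφψ))

theorem Subgroup.forall_mem_of_inv_mul_succ_mem {G : Type*} [Group G] {K : Subgroup G}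
    {y : ℤ → G} (h₀ : y 0 ∈ K) (h : ∀ n, (y (n + 1))⁻¹ * y n ∈ K) (n : ℤ) : y n ∈ K := by
  induction n using Int.induction_on with
  | zero => exact h₀
  | succ n ih => simpa using K.mul_mem ih (K.inv_mem (h n))
  | pred n ih =>
    have := K.mul_mem ih (h (-n - 1))
    rwa [sub_add_cancel, mul_inv_cancel_left] at this

theorem exists_inv_mul_succ_eq {G : Type*} [Group G] (a : G) (d : ℤ → G) :
    ∃ y : ℤ → G, y 0 = a ∧ ∀ n, (y (n + 1))⁻¹ * y n = d n := by
  refine ⟨fun n => n.inductionOn' 0 a (fun k _ x => x * (d k)⁻¹) (fun k _ x => x * d (k - 1)),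
    Int.inductionOn'_self, fun n => ?_⟩
  dsimp only
  rcases le_or_gt 0 n with hn | hn
  · rw [Int.inductionOn'_add_one hn]
    group
  · obtain ⟨k, rfl⟩ : ∃ k, n = k - 1 := ⟨n + 1, by ring⟩
    rw [sub_add_cancel, Int.inductionOn'_sub_one (by omega)]
    group

theorem exists_grid_inv_mul_succ_eq {G : Type*} [Group G] (a : G) (b : ℤ → ℤ → G)
    (c : ℤ → G) :
    ∃ Y : ℤ × ℤ → G, Y (0, 0) = a ∧ (∀ n m, (Y (n + 1, m))⁻¹ * Y (n, m) = b n m) ∧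
      ∀ m, (Y (0, m + 1))⁻¹ * Y (0, m) = c m := by
  obtain ⟨y, hy₀, hy⟩ := exists_inv_mul_succ_eq a c
  choose Y hY₀ hY using fun m => exists_inv_mul_succ_eq (y m) (b · m)
  exact ⟨fun p => Y p.2 p.1, by simp [hY₀, hy₀], fun n m => hY m n, fun m => by simp [hY₀, hy]⟩

namespace GridBasis

abbrev y (n m : ℤ) : FreeGroup (ℤ × ℤ) := FreeGroup.of (n, m)

def basis : Set (FreeGroup (ℤ × ℤ)) :=
  {y 0 0} ∪ {g | ∃ n m : ℤ, g = (y (n + 1) m)⁻¹ * y n m} ∪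
    {g | ∃ m : ℤ, g = (y 0 (m + 1))⁻¹ * y 0 m}

theorem closure_basis : Subgroup.closure basis = ⊤ := by
  set K := Subgroup.closure basis
  have hcol : ∀ m, y 0 m ∈ K :=
    Subgroup.forall_mem_of_inv_mul_succ_mem (Subgroup.subset_closure (.inl (.inl rfl)))
      fun m => Subgroup.subset_closure (.inr ⟨m, rfl⟩)
  have hrow : ∀ n m, y n m ∈ K := fun n m =>
    Subgroup.forall_mem_of_inv_mul_succ_mem (y := (y · m)) (hcol m)
      (fun n => Subgroup.subset_closure (.inl (.inr ⟨n, m, rfl⟩))) n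
  rw [eq_top_iff, ← FreeGroup.closure_range_of, Subgroup.closure_le]
  rintro _ ⟨⟨n, m⟩, rfl⟩
  exact hrow n m

theorem exists_hom_of_basis :
    ∃ ψ : FreeGroup (ℤ × ℤ) →* FreeGroup basis, ∀ s : basis, ψ s = FreeGroup.of s := by
  obtain ⟨Y, hY₀, hb, hc⟩ := exists_grid_inv_mul_succ_eq
    (FreeGroup.of (⟨y 0 0, .inl (.inl rfl)⟩ : basis))
    (fun n m => FreeGroup.of (⟨_, .inl (.inr ⟨n, m, rfl⟩)⟩ : basis))
    (fun m => FreeGroup.of (⟨_, .inr ⟨m, rfl⟩⟩ : basis))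
  refine ⟨FreeGroup.lift Y, ?_⟩
  rintro ⟨s, (rfl | ⟨n, m, rfl⟩) | ⟨m, rfl⟩⟩ <;> simp [hY₀, hb, hc]

end GridBasis

open GridBasis in
/-- The free group on the symbols `y_{n,m}`, `(n,m) ∈ ℤ²`, is freely generated by
`{ y_{0,0} } ∪ { y_{n+1,m}⁻¹ y_{n,m} } ∪ { y_{0,m+1}⁻¹ y_{0,m} }`. -/
theorem stmt10 :
    IsFreeBasis
      ({FreeGroup.of ((0 : ℤ), (0 : ℤ))} ∪
        {g : FreeGroup (ℤ × ℤ) | ∃ n m : ℤ,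
          g = (FreeGroup.of (n + 1, m))⁻¹ * FreeGroup.of (n, m)} ∪
        {g : FreeGroup (ℤ × ℤ) | ∃ m : ℤ,
          g = (FreeGroup.of ((0 : ℤ), m + 1))⁻¹ * FreeGroup.of ((0 : ℤ), m)})
      (⊤ : Subgroup (FreeGroup (ℤ × ℤ))) := by
  obtain ⟨ψ, hψ⟩ := exists_hom_of_basis
  exact isFreeBasis_top_of_closure_eq_top closure_basis ψ hψ
end
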